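/- arXiv:1502.03416 — 12 statements merged into one kernel-verified Lean document; each statement's English description precedes it below -/
import Mathlib

section
/- Fix n, p ∈ ℕ with all columns x₁,…,x_p of the design matrix X nonzero, y ∈ ℝⁿ and σ² > 0. Then the function γ ↦ ℓ(γ) attains its maximum over Θ = [0,∞)^p, i.e. there exists γ̂ ∈ Θ with ℓ(γ̂) ≥ ℓ(γ) for all γ ∈ Θ. -/
/-!
The quadratic term `yᵀ C_γ⁻¹ y` is nonnegative, so `ℓ(γ) ≤ -½ log det C_γ`. Writing
`C_γ = σ² (I + P)` with `P = σ⁻² Σ_j γ_j x_j x_jᵀ` positive semidefinite, the eigenvalues of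
`P` give `det C_γ ≥ σ^{2n} (1 + tr P) = σ^{2n} (1 + σ⁻² Σ_j γ_j ‖x_j‖²)`. Since every `x_j ≠ 0`,
this tends to `∞` as `γ` leaves the compact subsets of `Θ`, so `ℓ → -∞` there, and the
continuous function `ℓ` attains its maximum on the closed set `Θ`.
-/

open Matrix Filter Topology Set

theorem Finset.one_add_sum_le_prod_one_add {ι R : Type*} [CommSemiring R] [PartialOrder R]
    [IsOrderedRing R] (s : Finset ι) {f : ι → R} (hf : ∀ i ∈ s, 0 ≤ f i) :
    1 + ∑ i ∈ s, f i ≤ ∏ i ∈ s, (1 + f i) := by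
  classical
  induction s using Finset.induction_on with
  | empty => simp
  | insert a s ha ih =>
    rw [Finset.sum_insert ha, Finset.prod_insert ha]
    have hfa := hf a (Finset.mem_insert_self a s)
    have hs := fun i hi => hf i (Finset.mem_insert_of_mem hi)
    calc 1 + (f a + ∑ i ∈ s, f i)
        ≤ 1 + (f a + ∑ i ∈ s, f i) + f a * ∑ i ∈ s, f i :=
          le_add_of_nonneg_right (mul_nonneg hfa (Finset.sum_nonneg hs))
      _ = (1 + f a) * (1 + ∑ i ∈ s, f i) := by ring
      _ ≤ (1 + f a) * ∏ i ∈ s, (1 + f i) :=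
          mul_le_mul_of_nonneg_left (ih hs) (add_nonneg zero_le_one hfa)

namespace Matrix

variable {ι 𝕜 : Type*} [Fintype ι] [DecidableEq ι] [RCLike 𝕜]

theorem IsHermitian.det_one_add {A : Matrix ι ι 𝕜} (hA : A.IsHermitian) :
    (1 + A).det = ∏ i, (1 + (hA.eigenvalues i : 𝕜)) := by
  conv_lhs => rw [hA.spectral_theorem,
    ← map_one (Unitary.conjStarAlgAut 𝕜 _ hA.eigenvectorUnitary), ← map_add, det_map,
    ← diagonal_one, diagonal_add, det_diagonal]
  rfl

theorem PosSemidef.one_add_trace_le_det_one_add {P : Matrix ι ι ℝ} (hP : P.PosSemidef) :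
    1 + P.trace ≤ (1 + P).det := by
  rw [hP.isHermitian.det_one_add, hP.isHermitian.trace_eq_sum_eigenvalues]
  exact Finset.one_add_sum_le_prod_one_add _ fun i _ => hP.eigenvalues_nonneg i

theorem PosSemidef.le_det_smul_one_add {c : ℝ} (hc : 0 < c) {P : Matrix ι ι ℝ}
    (hP : P.PosSemidef) : c ^ Fintype.card ι * (1 + P.trace / c) ≤ (c • 1 + P).det := by
  have hcP : c • 1 + P = c • (1 + c⁻¹ • P) := by
    rw [smul_add, smul_inv_smul₀ hc.ne']
  have h := (hP.smul (inv_nonneg.2 hc.le)).one_add_trace_le_det_one_add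
  rw [trace_smul, smul_eq_mul, ← div_eq_inv_mul] at h
  rw [hcP, det_smul]
  exact mul_le_mul_of_nonneg_left h (by positivity)

end Matrix

theorem tendsto_sum_mul_cocompact_inf_nonneg {ι : Type*} [Fintype ι] {w : ι → ℝ}
    (hw : ∀ j, 0 < w j) :
    Tendsto (fun γ : ι → ℝ => ∑ j, γ j * w j) (cocompact (ι → ℝ) ⊓ 𝓟 (Ici 0)) atTop := by
  -- Tychonoff: `γ` leaves the compacts iff some coordinate `γ j` does, i.e. `γ j → ∞` on `Ici 0`.
  rw [← coprodᵢ_cocompact, Filter.coprodᵢ, ← iSup_inf_principal, tendsto_iSup]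
  intro j
  have hj : Tendsto (fun γ : ι → ℝ => γ j)
      (comap (Function.eval j) (cocompact ℝ) ⊓ 𝓟 (Ici 0)) atTop := by
    refine tendsto_atTop.2 fun b => ?_
    have hb : {s : ℝ | s < 0 ∨ b ≤ s} ∈ cocompact ℝ := by
      rw [cocompact_eq_atBot_atTop]
      exact mem_sup.2 ⟨(eventually_lt_atBot 0).mono fun s => Or.inl,
        (eventually_ge_atTop b).mono fun s => Or.inr⟩
    filter_upwards [mem_inf_of_left (preimage_mem_comap hb),
      mem_inf_of_right (mem_principal_self _)] with γ hγb hγ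
    exact hγb.resolve_left (hγ j).not_gt
  refine tendsto_atTop_mono' _ ?_ (hj.atTop_mul_const (hw j))
  filter_upwards [mem_inf_of_right (mem_principal_self _)] with γ hγ
  exact Finset.single_le_sum (f := fun i => γ i * w i)
    (fun i _ => mul_nonneg (hγ i) (hw i).le) (Finset.mem_univ j)

section SparseBayesianLearning

variable {κ ι : Type*} [Fintype ι] {σ2 : ℝ} {x : ι → κ → ℝ} {γ : ι → ℝ}

theorem posSemidef_sum_smul_vecMulVec [Fintype κ] (hγ : 0 ≤ γ) :
    (∑ j, γ j • vecMulVec (x j) (x j)).PosSemidef :=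
  posSemidef_sum _ fun j _ => by
    simpa using (posSemidef_vecMulVec_self_star (x j)).smul (hγ j)

theorem trace_sum_smul_vecMulVec [Fintype κ] :
    (∑ j, γ j • vecMulVec (x j) (x j)).trace = ∑ j, γ j * (x j ⬝ᵥ x j) := by
  simp [trace_sum, trace_smul, trace_vecMulVec]

variable [DecidableEq κ]

variable (σ2 x) in
def sblCovariance (γ : ι → ℝ) : Matrix κ κ ℝ :=
  σ2 • 1 + ∑ j, γ j • vecMulVec (x j) (x j)

theorem continuous_sblCovariance : Continuous (sblCovariance σ2 x) := by
  unfold sblCovariance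
  fun_prop

variable [Fintype κ]

variable (σ2 x) in
noncomputable def sblLogLikelihood (y : κ → ℝ) (γ : ι → ℝ) : ℝ :=
  -(1 / 2) * Real.log (sblCovariance σ2 x γ).det
    - (1 / 2) * (y ⬝ᵥ (sblCovariance σ2 x γ)⁻¹ *ᵥ y)

theorem posDef_sblCovariance (hσ : 0 < σ2) (hγ : 0 ≤ γ) : (sblCovariance σ2 x γ).PosDef :=
  (PosDef.one.smul hσ).add_posSemidef (posSemidef_sum_smul_vecMulVec hγ)

theorem tendsto_det_sblCovariance (hσ : 0 < σ2) (hx : ∀ j, x j ≠ 0) :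
    Tendsto (fun γ => (sblCovariance σ2 x γ).det) (cocompact (ι → ℝ) ⊓ 𝓟 (Ici 0)) atTop := by
  have htrace := tendsto_sum_mul_cocompact_inf_nonneg fun j => by
    simpa using dotProduct_self_star_pos_iff.2 (hx j)
  refine tendsto_atTop_mono' _ ?_ ((tendsto_atTop_add_const_left _ 1
    (htrace.atTop_div_const hσ)).const_mul_atTop (pow_pos hσ (Fintype.card κ)))
  filter_upwards [mem_inf_of_right (mem_principal_self _)] with γ hγ
  rw [← trace_sum_smul_vecMulVec]
  exact (posSemidef_sum_smul_vecMulVec hγ).le_det_smul_one_add hσ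

theorem sblLogLikelihood_le (hσ : 0 < σ2) (hγ : 0 ≤ γ) (y : κ → ℝ) :
    sblLogLikelihood σ2 x y γ ≤ -(1 / 2) * Real.log (sblCovariance σ2 x γ).det := by
  have hquad := (posDef_sblCovariance (x := x) hσ hγ).inv.posSemidef.dotProduct_mulVec_nonneg y
  simp only [star_trivial] at hquad
  unfold sblLogLikelihood
  linarith

theorem tendsto_sblLogLikelihood (hσ : 0 < σ2) (hx : ∀ j, x j ≠ 0) (y : κ → ℝ) :
    Tendsto (sblLogLikelihood σ2 x y) (cocompact (ι → ℝ) ⊓ 𝓟 (Ici 0)) atBot := by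
  refine tendsto_atBot_mono' _ ?_ ((Real.tendsto_log_atTop.comp
    (tendsto_det_sblCovariance hσ hx)).const_mul_atTop_of_neg (by norm_num : -(1 / 2 : ℝ) < 0))
  filter_upwards [mem_inf_of_right (mem_principal_self _)] with γ hγ
  exact sblLogLikelihood_le hσ hγ y

theorem continuousOn_sblLogLikelihood (hσ : 0 < σ2) (y : κ → ℝ) :
    ContinuousOn (sblLogLikelihood σ2 x y) (Ici 0) := by
  intro γ hγ
  have hdet : (sblCovariance σ2 x γ).det ≠ 0 := (posDef_sblCovariance hσ hγ).det_pos.ne'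
  have hC := continuous_sblCovariance (σ2 := σ2) (x := x)
  have hinv : ContinuousAt (fun γ => (sblCovariance σ2 x γ)⁻¹) γ :=
    (continuousAt_matrix_inv _ (by simpa [Ring.inverse_eq_inv'] using continuousAt_inv₀ hdet)).comp
      hC.continuousAt
  have hquad : Continuous fun M : Matrix κ κ ℝ => y ⬝ᵥ M *ᵥ y := by fun_prop
  exact ((continuousAt_const.mul (hC.matrix_det.continuousAt.log hdet)).sub
    (continuousAt_const.mul (hquad.continuousAt.comp hinv))).continuousWithinAt

end SparseBayesianLearning

/-- Existence of a maximizer of the sparse Bayesian learning marginal log-likelihood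
`L(γ) = -½ log det C_γ - ½ yᵀ C_γ⁻¹ y`, with `C_γ = σ² Iₙ + Σ_j γ_j x_j x_jᵀ`, over
`Θ = [0,∞)^p`, when all columns `x_j` of the design matrix are nonzero. -/
theorem sbl_maximizer_exists (n p : ℕ) (y : Fin n → ℝ)
    (x : Fin p → Fin n → ℝ) (hxne : ∀ j, x j ≠ 0)
    (σ2 : ℝ) (hσ : 0 < σ2)
    (C : (Fin p → ℝ) → Matrix (Fin n) (Fin n) ℝ)
    (hC : ∀ γ, C γ = σ2 • (1 : Matrix (Fin n) (Fin n) ℝ) +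
      ∑ j : Fin p, γ j • vecMulVec (x j) (x j))
    (L : (Fin p → ℝ) → ℝ)
    (hL : ∀ γ, L γ = -(1/2) * Real.log (C γ).det - (1/2) * (y ⬝ᵥ (C γ)⁻¹.mulVec y)) :
    ∃ γhat : Fin p → ℝ, (∀ j, 0 ≤ γhat j) ∧
      ∀ γ : Fin p → ℝ, (∀ j, 0 ≤ γ j) → L γ ≤ L γhat := by
  obtain rfl : C = sblCovariance σ2 x := funext hC
  obtain rfl : L = sblLogLikelihood σ2 x y := funext hL
  obtain ⟨γhat, hγhat, hmax⟩ := (continuousOn_sblLogLikelihood hσ y).exists_isMaxOn'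
    isClosed_Ici (self_mem_Ici (a := 0))
    ((tendsto_sblLogLikelihood hσ hxne y).eventually_le_atBot _)
  exact ⟨γhat, hγhat, fun γ hγ => hmax (show 0 ≤ γ from hγ)⟩
end

section
/- Let γ̂ ∈ Θ = [0,∞)^p be any maximizer of ℓ over Θ, and assume all columns x_j are nonzero. For each j ∈ {1,…,p} set C_j := σ²·Iₙ + Σ_{k≠j} γ̂_k x_k x_kᵀ. Then for every j: if (x_jᵀ C_j⁻¹ y)² > x_jᵀ C_j⁻¹ x_j then γ̂_j = ((x_jᵀ C_j⁻¹ y)² − x_jᵀ C_j⁻¹ x_j) / (x_jᵀ C_j⁻¹ x_j)², and otherwise γ̂_j = 0. -/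
/-!
Freeing only the `j`-th coordinate, `C γ = C_j + γ_j x_j x_jᵀ` is a rank-one update of `C_j`, so
by the matrix determinant lemma and the Sherman–Morrison formula the log-likelihood along that
coordinate is `ℓ(C_j) + ½ (t q² / (1 + t s) - log (1 + t s))` with `s = x_jᵀ C_j⁻¹ x_j > 0` and
`q = x_jᵀ C_j⁻¹ y`. In the variable `u = 1 + t s ≥ 1` this is `(q²/s)(1 - 1/u) - log u`, whose
derivative `(q²/s - u)/u²` shows that its unique maximizer is `u = max 1 (q²/s)`.
-/

open Matrix

namespace Matrix

variable {m K : Type*} [Fintype m] [DecidableEq m] [Field K]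

theorem inv_add_vecMulVec {A : Matrix m m K} (hA : IsUnit A.det) (u v : m → K)
    (h : 1 + v ⬝ᵥ A⁻¹ *ᵥ u ≠ 0) :
    (A + vecMulVec u v)⁻¹ =
      A⁻¹ - (1 + v ⬝ᵥ A⁻¹ *ᵥ u)⁻¹ • vecMulVec (A⁻¹ *ᵥ u) (v ᵥ* A⁻¹) := by
  refine inv_eq_right_inv ?_
  have hAA : A * A⁻¹ = 1 := mul_nonsing_inv A hA
  rw [add_mul, mul_sub, mul_sub, Matrix.mul_smul, Matrix.mul_smul, mul_vecMulVec, mulVec_mulVec,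
    hAA, one_mulVec, vecMulVec_mul_vecMulVec, vecMulVec_mul, vecMulVec_smul]
  match_scalars
  · simp
  · field_simp
    ring

theorem det_add_vecMulVec {A : Matrix m m K} (hA : IsUnit A.det) (u v : m → K) :
    (A + vecMulVec u v).det = A.det * (1 + v ⬝ᵥ A⁻¹ *ᵥ u) := by
  rw [vecMulVec_eq Unit, det_add_replicateCol_mul_replicateRow hA, Matrix.mul_assoc,
    ← replicateCol_mulVec]
  simp only [det_unique]
  rfl

theorem dotProduct_inv_add_vecMulVec_mulVec {A : Matrix m m K} (hA : IsUnit A.det)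
    (u v : m → K) (h : 1 + v ⬝ᵥ A⁻¹ *ᵥ u ≠ 0) (y z : m → K) :
    y ⬝ᵥ (A + vecMulVec u v)⁻¹ *ᵥ z =
      y ⬝ᵥ A⁻¹ *ᵥ z - (y ⬝ᵥ A⁻¹ *ᵥ u) * (v ⬝ᵥ A⁻¹ *ᵥ z) / (1 + v ⬝ᵥ A⁻¹ *ᵥ u) := by
  rw [inv_add_vecMulVec hA u v h, sub_mulVec, dotProduct_sub, smul_mulVec, dotProduct_smul,
    vecMulVec_mulVec, ← dotProduct_mulVec, dotProduct_smul]
  simp only [op_smul_eq_smul, smul_eq_mul]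
  ring

theorem posDef_smul_one_add_sum_smul_vecMulVec {ι : Type*} {c : ℝ} (hc : 0 < c)
    (s : Finset ι) (γ : ι → ℝ) (hγ : ∀ k ∈ s, 0 ≤ γ k) (x : ι → m → ℝ) :
    (c • (1 : Matrix m m ℝ) + ∑ k ∈ s, γ k • vecMulVec (x k) (x k)).PosDef := by
  have hrankOne : ∀ k, (vecMulVec (x k) (x k)).PosSemidef := fun k => by
    simpa using posSemidef_vecMulVec_self_star (x k)
  exact (PosDef.one.smul hc).add_posSemidef <|
    posSemidef_sum s fun k hk => (hrankOne k).smul (hγ k hk)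

end Matrix

section RankOneProfile

variable {m : Type*} [Fintype m] [DecidableEq m]

noncomputable def gaussianLogLik (y : m → ℝ) (A : Matrix m m ℝ) : ℝ :=
  -(1/2) * Real.log A.det - (1/2) * (y ⬝ᵥ A⁻¹ *ᵥ y)

noncomputable def rankOneProfile (s q t : ℝ) : ℝ :=
  t / (1 + t * s) * q ^ 2 - Real.log (1 + t * s)

theorem gaussianLogLik_add_smul_vecMulVec {A : Matrix m m ℝ} (hA : A.PosDef) (u y : m → ℝ)
    {t : ℝ} (ht : 0 ≤ t) :
    gaussianLogLik y (A + t • vecMulVec u u) =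
      gaussianLogLik y A + rankOneProfile (u ⬝ᵥ A⁻¹ *ᵥ u) (u ⬝ᵥ A⁻¹ *ᵥ y) t / 2 := by
  have hdet : IsUnit A.det := isUnit_iff_ne_zero.mpr hA.det_pos.ne'
  have hs : 0 ≤ u ⬝ᵥ A⁻¹ *ᵥ u := by
    simpa using hA.inv.posSemidef.dotProduct_mulVec_nonneg u
  have hd : 0 < 1 + t * (u ⬝ᵥ A⁻¹ *ᵥ u) := by positivity
  have hsymm : y ⬝ᵥ A⁻¹ *ᵥ u = u ⬝ᵥ A⁻¹ *ᵥ y := by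
    rw [dotProduct_mulVec, ← mulVec_transpose, dotProduct_comm,
      ← conjTranspose_eq_transpose_of_trivial, hA.isHermitian.inv]
  have hts : u ⬝ᵥ A⁻¹ *ᵥ (t • u) = t * (u ⬝ᵥ A⁻¹ *ᵥ u) := by
    rw [mulVec_smul, dotProduct_smul, smul_eq_mul]
  rw [← smul_vecMulVec, gaussianLogLik, gaussianLogLik, rankOneProfile, det_add_vecMulVec hdet,
    dotProduct_inv_add_vecMulVec_mulVec hdet _ _ (by rw [hts]; exact hd.ne'), hts,
    Real.log_mul hA.det_pos.ne' hd.ne', mulVec_smul, dotProduct_smul, smul_eq_mul, hsymm]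
  ring

/-- `(q ^ 2 - s) / s ^ 2` is the stationary point of the profile: moving from `t₀` towards it
strictly increases the profile. -/
theorem rankOneProfile_lt {s q t t₀ : ℝ} (hs : 0 < s) (ht : 0 ≤ t) (ht₀ : 0 ≤ t₀) (hne : t ≠ t₀)
    (hbetween : (t - t₀) * (t - (q ^ 2 - s) / s ^ 2) ≤ 0) :
    rankOneProfile s q t₀ < rankOneProfile s q t := by
  have hu : 0 < 1 + t * s := by positivity
  have hu₀ : 0 < 1 + t₀ * s := by positivity
  have hratio : (1 + t * s) / (1 + t₀ * s) ≠ 1 := by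
    rw [Ne, div_eq_one_iff_eq hu₀.ne']
    exact fun h => hne (mul_right_cancel₀ hs.ne' (by linarith))
  have hlog := Real.log_lt_sub_one_of_pos (div_pos hu hu₀) hratio
  rw [Real.log_div hu.ne' hu₀.ne'] at hlog
  -- `log w < w - 1` at `w = (1 + t s) / (1 + t₀ s)` bounds the gap by a rational function.
  have hgap : rankOneProfile s q t₀ - rankOneProfile s q t
      - (Real.log (1 + t * s) - Real.log (1 + t₀ * s)) + ((1 + t * s) / (1 + t₀ * s) - 1)
      = s ^ 2 * ((t - t₀) * (t - (q ^ 2 - s) / s ^ 2)) / ((1 + t * s) * (1 + t₀ * s)) := by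
    unfold rankOneProfile
    field_simp
    ring
  have hnonpos : s ^ 2 * ((t - t₀) * (t - (q ^ 2 - s) / s ^ 2)) / ((1 + t * s) * (1 + t₀ * s))
      ≤ 0 :=
    div_nonpos_of_nonpos_of_nonneg (mul_nonpos_of_nonneg_of_nonpos (by positivity) hbetween)
      (by positivity)
  linarith

theorem eq_of_isMaxOn_rankOneProfile {s q t₀ : ℝ} (hs : 0 < s) (ht₀ : 0 ≤ t₀)
    (hmax : IsMaxOn (rankOneProfile s q) (Set.Ici 0) t₀) :
    if s < q ^ 2 then t₀ = (q ^ 2 - s) / s ^ 2 else t₀ = 0 := by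
  split_ifs with hq
  · have hstar : 0 ≤ (q ^ 2 - s) / s ^ 2 := div_nonneg (by linarith) (by positivity)
    by_contra hne
    exact (hmax (Set.mem_Ici.mpr hstar)).not_gt
      (rankOneProfile_lt hs hstar ht₀ (Ne.symm hne) (by simp))
  · have hstar : (q ^ 2 - s) / s ^ 2 ≤ 0 :=
      div_nonpos_of_nonpos_of_nonneg (by linarith) (by positivity)
    by_contra hne
    exact (hmax (Set.mem_Ici.mpr le_rfl)).not_gt
      (rankOneProfile_lt hs le_rfl ht₀ (Ne.symm hne) (by nlinarith))

/-- Coordinatewise characterization of any maximizer `γhat` of the sparse Bayesian learning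
marginal log-likelihood over `Θ = [0,∞)^p`: with
`C_j = σ² Iₙ + Σ_{k≠j} γhat_k x_k x_kᵀ`, for every `j`,
`γhat_j = ((x_jᵀC_j⁻¹y)² - x_jᵀC_j⁻¹x_j)/(x_jᵀC_j⁻¹x_j)²` if `(x_jᵀC_j⁻¹y)² > x_jᵀC_j⁻¹x_j`,
and `γhat_j = 0` otherwise. -/
theorem sbl_maximizer_fixed_point (n p : ℕ) (y : Fin n → ℝ)
    (x : Fin p → Fin n → ℝ) (hxne : ∀ j, x j ≠ 0)
    (σ2 : ℝ) (hσ : 0 < σ2)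
    (C : (Fin p → ℝ) → Matrix (Fin n) (Fin n) ℝ)
    (hC : ∀ γ, C γ = σ2 • (1 : Matrix (Fin n) (Fin n) ℝ) +
      ∑ j : Fin p, γ j • vecMulVec (x j) (x j))
    (L : (Fin p → ℝ) → ℝ)
    (hL : ∀ γ, L γ = -(1/2) * Real.log (C γ).det - (1/2) * (y ⬝ᵥ (C γ)⁻¹.mulVec y))
    (γhat : Fin p → ℝ) (hpos : ∀ j, 0 ≤ γhat j)
    (hmax : ∀ γ : Fin p → ℝ, (∀ j, 0 ≤ γ j) → L γ ≤ L γhat)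
    (Cj : Fin p → Matrix (Fin n) (Fin n) ℝ)
    (hCj : ∀ j, Cj j = σ2 • (1 : Matrix (Fin n) (Fin n) ℝ) +
      ∑ k ∈ Finset.univ.erase j, γhat k • vecMulVec (x k) (x k)) :
    ∀ j : Fin p,
      if x j ⬝ᵥ (Cj j)⁻¹.mulVec (x j) < (x j ⬝ᵥ (Cj j)⁻¹.mulVec y)^2
      then γhat j = ((x j ⬝ᵥ (Cj j)⁻¹.mulVec y)^2 - x j ⬝ᵥ (Cj j)⁻¹.mulVec (x j)) /
        (x j ⬝ᵥ (Cj j)⁻¹.mulVec (x j))^2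
      else γhat j = 0 := by
  intro j
  have hA : (Cj j).PosDef :=
    hCj j ▸ posDef_smul_one_add_sum_smul_vecMulVec hσ _ γhat (fun k _ => hpos k) x
  have hs : 0 < x j ⬝ᵥ (Cj j)⁻¹ *ᵥ x j := by
    simpa using hA.inv.dotProduct_mulVec_pos (hxne j)
  have hcov : ∀ t, C (Function.update γhat j t) = Cj j + t • vecMulVec (x j) (x j) := by
    intro t
    rw [hC, hCj, ← Finset.add_sum_erase _ _ (Finset.mem_univ j), Function.update_self,
      Finset.sum_congr rfl fun k hk => by rw [Function.update_of_ne (Finset.ne_of_mem_erase hk)],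
      add_comm (t • _), add_assoc]
  have hLt : ∀ t, 0 ≤ t → L (Function.update γhat j t) =
      gaussianLogLik y (Cj j) +
        rankOneProfile (x j ⬝ᵥ (Cj j)⁻¹ *ᵥ x j) (x j ⬝ᵥ (Cj j)⁻¹ *ᵥ y) t / 2 := by
    intro t ht
    rw [hL, hcov, ← gaussianLogLik_add_smul_vecMulVec hA _ _ ht, gaussianLogLik]
  refine eq_of_isMaxOn_rankOneProfile hs (hpos j) (isMaxOn_iff.mpr fun t ht => ?_)
  have hle := hmax (Function.update γhat j t) fun k => by
    rcases eq_or_ne k j with rfl | hk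
    · rwa [Function.update_self]
    · rw [Function.update_of_ne hk]; exact hpos k
  have hγhat := hLt (γhat j) (hpos j)
  rw [Function.update_eq_self] at hγhat
  rw [hLt t ht, hγhat] at hle
  linarith
end RankOneProfile
end

section
/- Let a ∈ ℝ and b > 0, and define h : [0,∞) → ℝ by h(t) := −½ log(1 + t b) + ½ t a² / (1 + t b). If a² ≤ b then h attains its maximum over [0,∞) at t = 0, i.e. h(t) ≤ h(0) for all t ≥ 0. If a² > b then h attains its maximum over [0,∞) at t⋆ := (a² − b)/b², i.e. h(t) ≤ h(t⋆) for all t ≥ 0. -/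
/-!
Substituting `u = 1 + t b` and `c = a² / b` gives `h(t) = ½ (c (1 - u⁻¹) - log u)`.
The inequality `log (c / u) ≤ c / u - 1` says exactly that this is maximal over `u > 0` at
`u = c`, which is `t = t⋆`. When `c ≤ 1` the constraint `u ≥ 1` is active, and the bound for
`c = 1`, maximal at `u = 1`, dominates.
-/

open Real

noncomputable def sblProfile (c u : ℝ) : ℝ := c * (1 - u⁻¹) - log u

lemma sblProfile_one (c : ℝ) : sblProfile c 1 = 0 := by
  simp [sblProfile]

lemma sblProfile_le_self {c u : ℝ} (hc : 0 < c) (hu : 0 < u) :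
    sblProfile c u ≤ sblProfile c c := by
  have key := log_le_sub_one_of_pos (div_pos hc hu)
  rw [log_div hc.ne' hu.ne'] at key
  have hcu : c * (1 - u⁻¹) = c - c / u := by ring
  have hcc : c * (1 - c⁻¹) = c - 1 := by field_simp
  simp only [sblProfile, hcu, hcc]
  linarith

lemma sblProfile_le_zero {c u : ℝ} (hc : c ≤ 1) (hu : 1 ≤ u) : sblProfile c u ≤ 0 :=
  calc sblProfile c u ≤ sblProfile 1 u := by
        have : 0 ≤ 1 - u⁻¹ := sub_nonneg.mpr (inv_le_one_of_one_le₀ hu)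
        unfold sblProfile
        nlinarith
    _ ≤ sblProfile 1 1 := sblProfile_le_self one_pos (by linarith)
    _ = 0 := sblProfile_one 1

lemma neg_half_log_add_half_div_eq_sblProfile {a b t : ℝ} (hb : b ≠ 0) (hu : 1 + t * b ≠ 0) :
    -(1/2) * log (1 + t * b) + (1/2) * t * a^2 / (1 + t * b) =
      (1/2) * sblProfile (a^2 / b) (1 + t * b) := by
  unfold sblProfile
  field_simp
  ring

/-- The one-dimensional maximization underlying the coordinatewise characterization of the
sparse Bayesian learning maximizer: with `b = xᵀA⁻¹x > 0` and `a = xᵀA⁻¹y`, the profile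
log-likelihood `h(t) = -½ log(1 + t b) + ½ t a² / (1 + t b)` attains its maximum over `[0,∞)`
at `t = 0` when `a² ≤ b`, and at `t⋆ = (a² - b)/b²` when `a² > b`. -/
theorem sbl_scalar_profile_max (a b : ℝ) (hb : 0 < b)
    (h : ℝ → ℝ)
    (hh : ∀ t, h t = -(1/2) * Real.log (1 + t * b) + (1/2) * t * a^2 / (1 + t * b)) :
    (a^2 ≤ b → ∀ t, 0 ≤ t → h t ≤ h 0) ∧
    (b < a^2 → ∀ t, 0 ≤ t → h t ≤ h ((a^2 - b) / b^2)) := by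
  have hh' : ∀ t, 0 < 1 + t * b → h t = (1/2) * sblProfile (a^2 / b) (1 + t * b) :=
    fun t hu => by rw [hh, neg_half_log_add_half_div_eq_sblProfile hb.ne' hu.ne']
  have hstar : 1 + (a^2 - b) / b^2 * b = a^2 / b := by field_simp; ring
  constructor
  · intro hab t ht
    have hu : 1 ≤ 1 + t * b := by nlinarith
    rw [hh' t (by linarith), hh' 0 (by simp), zero_mul, add_zero, sblProfile_one]
    linarith [sblProfile_le_zero ((div_le_one hb).mpr hab) hu]
  · intro hab t ht
    have hc : 0 < a^2 / b := div_pos (hb.trans hab) hb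
    rw [hh' t (by positivity), hh' _ (hstar ▸ hc), hstar]
    linarith [sblProfile_le_self hc (by positivity : 0 < 1 + t * b)]
end

section
/- Assume the columns of X are pairwise orthogonal and x_j ≠ 0 for a fixed index j with β⋆_j = 0. Then the law of Y := Xβ⋆ + ε satisfies P[⟨x_j, Y⟩² ≤ σ²‖x_j‖²] = P[Z² ≤ 1], where Z is a standard Gaussian random variable (law gaussianReal 0 1). Equivalently, under the orthogonal design the SBL hyperparameter estimate γ̂_{n,j} equals 0 exactly on the event {⟨x_j,Y⟩² ≤ σ²‖x_j‖²}, and this event has probability P[Z² ≤ 1] ≈ 0.68, independently of the sample size. -/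
open Matrix MeasureTheory ProbabilityTheory NNReal

/-!
Orthogonality of the columns and `β⋆_j = 0` make the signal drop out of the statistic:
`⟨x_j, Xβ⋆⟩ = ∑ₖ ⟨x_j, x_k⟩ β⋆_k = 0`, so `⟨x_j, Y⟩ = ⟨x_j, ε⟩`. A linear form of independent
Gaussians is Gaussian, here `N(0, σ²‖x_j‖²)`, and dividing by its standard deviation turns the
event `⟨x_j, ε⟩² ≤ σ²‖x_j‖²` into `Z² ≤ 1` for a standard Gaussian `Z`.
-/

theorem Matrix.dotProduct_mulVec_eq_zero {R m n : Type*} [CommSemiring R] [Fintype m]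
    [Fintype n] (X : Matrix m n R) (y : m → R) (β : n → R)
    (h : ∀ k, β k ≠ 0 → y ⬝ᵥ Xᵀ k = 0) : y ⬝ᵥ X *ᵥ β = 0 := by
  rw [dotProduct_mulVec]
  refine Finset.sum_eq_zero fun k _ => ?_
  by_cases hk : β k = 0
  · rw [hk, mul_zero]
  · rw [show (y ᵥ* X) k = 0 from h k hk, zero_mul]

namespace ProbabilityTheory

lemma map_dotProduct_pi_gaussianReal {ι : Type*} [Fintype ι] (m : ι → ℝ) (v : ι → ℝ≥0)
    (c : ι → ℝ) :
    (Measure.pi fun i => gaussianReal (m i) (v i)).map (c ⬝ᵥ ·)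
      = gaussianReal (c ⬝ᵥ m) (∑ i, c i ^ 2 * v i).toNNReal := by
  set P := Measure.pi fun i => gaussianReal (m i) (v i)
  have hcoord (i : ι) : HasLaw (fun ε : ι → ℝ => ε i) (gaussianReal (m i) (v i)) P :=
    (measurePreserving_eval (fun i => gaussianReal (m i) (v i)) i).hasLaw
  have hlaw : HasGaussianLaw (c ⬝ᵥ ·) P :=
    iIndepFun.hasGaussianLaw_fun_sum (X := fun i (ε : ι → ℝ) => c i * ε i)
      (fun i => (hcoord i).hasGaussianLaw.fun_smul (c i))
      (iIndepFun_pi (X := fun i (t : ℝ) => c i * t) fun i => by fun_prop)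
  have hmean : P[(c ⬝ᵥ ·)] = c ⬝ᵥ m := by
    simp only [dotProduct]
    rw [integral_finsetSum _ fun i _ => (hcoord i).hasGaussianLaw.integrable.const_mul (c i)]
    simp only [integral_const_mul, fun i => (hcoord i).integral_eq, integral_id_gaussianReal]
  have hvar : Var[(c ⬝ᵥ ·); P] = ∑ i, c i ^ 2 * v i := by
    have := variance_sum_pi (μ := fun i => gaussianReal (m i) (v i))
      (X := fun i (t : ℝ) => c i * t) fun i => (memLp_id_gaussianReal 2).const_mul (c i)
    convert this using 1
    · congr 1 with ε
      simp [dotProduct]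
    · refine Finset.sum_congr rfl fun i _ => ?_
      simpa using (variance_const_mul (c i) id (gaussianReal (m i) (v i))).symm
  rw [hlaw.map_eq_gaussianReal, hmean, hvar]

lemma gaussianReal_setOf_sq_le_var {v : ℝ≥0} (hv : v ≠ 0) :
    gaussianReal 0 v {z | z ^ 2 ≤ v} = gaussianReal 0 1 {z | z ^ 2 ≤ 1} := by
  have hpos : (0 : ℝ) < v := NNReal.coe_pos.mpr (pos_iff_ne_zero.mpr hv)
  have hstd : (gaussianReal 0 v).map (· / √(v : ℝ)) = gaussianReal 0 1 := by
    rw [gaussianReal_map_div_const, zero_div]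
    congr 1
    ext
    simp [Real.sq_sqrt v.coe_nonneg, div_self (NNReal.coe_ne_zero.mpr hv)]
  rw [← hstd, Measure.map_apply (by fun_prop) (measurableSet_le (by fun_prop) (by fun_prop))]
  congr 1 with z
  simp only [Set.mem_preimage, Set.mem_ofPred_eq, div_pow, Real.sq_sqrt hpos.le, div_le_one hpos]

end ProbabilityTheory

/-- Under an orthogonal design with Gaussian noise `ε ~ N(0, σ² Iₙ)` and `Y = Xβ⋆ + ε`,
if `β⋆_j = 0` then the event `{⟨x_j, Y⟩² ≤ σ²‖x_j‖²}` — which, under the orthogonal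
design, is exactly the event on which the SBL hyperparameter estimate `γhat_{n,j}`
equals `0` — has probability `P[Z² ≤ 1] ≈ 0.68` where `Z ~ N(0,1)`, independently of
the sample size. -/
theorem sbl_zero_probability_orthogonal (n p : ℕ)
    (X : Matrix (Fin n) (Fin p) ℝ)
    (x : Fin p → Fin n → ℝ) (hx : ∀ j, x j = fun i => X i j)
    (horth : ∀ j k, j ≠ k → x j ⬝ᵥ x k = 0)
    (β : Fin p → ℝ) (σ2 : NNReal) (hσ : 0 < σ2)
    (j : Fin p) (hxj : x j ≠ 0) (hβj : β j = 0) :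
    Measure.pi (fun _ : Fin n => gaussianReal 0 σ2)
        {ε : Fin n → ℝ | (x j ⬝ᵥ (X.mulVec β + ε))^2 ≤ (σ2 : ℝ) * (x j ⬝ᵥ x j)}
      = gaussianReal 0 1 {z : ℝ | z^2 ≤ 1} := by
  have hsignal : x j ⬝ᵥ X *ᵥ β = 0 :=
    X.dotProduct_mulVec_eq_zero _ _ fun k hk =>
      (congrArg (x j ⬝ᵥ ·) (hx k)).symm.trans (horth j k fun hjk => hk (hjk ▸ hβj))
  have hvar : ∑ i, x j i ^ 2 * σ2 = σ2 * (x j ⬝ᵥ x j) := by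
    simp only [dotProduct, Finset.mul_sum, sq, mul_comm]
  have hpos : 0 < (σ2 : ℝ) * (x j ⬝ᵥ x j) :=
    mul_pos hσ (by simpa using dotProduct_star_self_pos_iff.mpr hxj)
  have hevent : {ε : Fin n → ℝ | (x j ⬝ᵥ (X *ᵥ β + ε)) ^ 2 ≤ (σ2 : ℝ) * (x j ⬝ᵥ x j)}
      = (x j ⬝ᵥ ·) ⁻¹' {y | y ^ 2 ≤ (σ2 : ℝ) * (x j ⬝ᵥ x j)} := by
    ext ε
    simp [dotProduct_add, hsignal]
  rw [hevent, ← Measure.map_apply (by fun_prop) (measurableSet_le (by fun_prop) (by fun_prop)),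
    map_dotProduct_pi_gaussianReal, hvar]
  simpa [Real.coe_toNNReal _ hpos.le] using
    gaussianReal_setOf_sq_le_var (v := (σ2 * (x j ⬝ᵥ x j)).toNNReal) (by simpa using hpos)
end

section
/- Assume the columns x₁,…,x_p of X are pairwise orthogonal and all nonzero, and let γ̂ ∈ [0,∞)^p satisfy the coordinatewise fixed-point property: for every j, with C_j := σ²Iₙ + Σ_{k≠j} γ̂_k x_k x_kᵀ, γ̂_j = ((x_jᵀC_j⁻¹y)² − x_jᵀC_j⁻¹x_j)/(x_jᵀC_j⁻¹x_j)² if (x_jᵀC_j⁻¹y)² > x_jᵀC_j⁻¹x_j and γ̂_j = 0 otherwise. Then γ̂ is given explicitly by: γ̂_j = (⟨y, x_j⟩² − σ²‖x_j‖²)/‖x_j‖⁴ if ⟨y, x_j⟩² > σ²‖x_j‖², and γ̂_j = 0 otherwise. -/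
/-!
Orthogonality makes `x_j` an eigenvector of `C_j = σ² I + Σ_{k≠j} γ_k x_k x_kᵀ` with eigenvalue
`σ²`. As `C_j` is symmetric and invertible (positive definite), `x_jᵀ C_j⁻¹ v = σ⁻² ⟨v, x_j⟩`
for every `v`, and substituting these values into the fixed-point equation and rescaling by `σ⁴`
gives the explicit formula.
-/

open Matrix

section Eigenvector

variable {m ι : Type*} [Fintype m] [DecidableEq m]

theorem smul_one_add_sum_vecMulVec_mulVec_of_orthogonal {R : Type*} [CommRing R] (c : R)
    (s : Finset ι) (γ : ι → R) (x : ι → m → R) {v : m → R} (hv : ∀ k ∈ s, x k ⬝ᵥ v = 0) :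
    (c • (1 : Matrix m m R) + ∑ k ∈ s, γ k • vecMulVec (x k) (x k)) *ᵥ v = c • v := by
  have hterm : ∀ k ∈ s, (γ k • vecMulVec (x k) (x k)) *ᵥ v = 0 := fun k hk => by
    rw [smul_mulVec, vecMulVec_mulVec, hv k hk]
    simp
  rw [add_mulVec, smul_mulVec, one_mulVec, sum_mulVec, Finset.sum_eq_zero hterm, add_zero]

theorem posDef_smul_one_add_sum_vecMulVec {σ2 : ℝ} (hσ : 0 < σ2) (s : Finset ι) {γ : ι → ℝ}
    (hγ : ∀ k ∈ s, 0 ≤ γ k) (x : ι → m → ℝ) :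
    (σ2 • (1 : Matrix m m ℝ) + ∑ k ∈ s, γ k • vecMulVec (x k) (x k)).PosDef :=
  (PosDef.one.smul hσ).add_posSemidef <| posSemidef_sum s fun k hk => by
    simpa using (posSemidef_vecMulVec_self_star (x k)).smul (hγ k hk)

variable {K : Type*} [Field K] {A : Matrix m m K} {c : K} {v : m → K}

theorem inv_mulVec_eq_inv_smul_of_mulVec_eq_smul (hA : IsUnit A) (hv : A *ᵥ v = c • v) :
    A⁻¹ *ᵥ v = c⁻¹ • v := by
  have hinv : c • A⁻¹ *ᵥ v = v := by
    rw [← mulVec_smul, ← hv, mulVec_mulVec, nonsing_inv_mul _ (A.isUnit_iff_isUnit_det.mp hA),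
      one_mulVec]
  rcases eq_or_ne c 0 with rfl | hc
  · rw [← hinv]
    simp
  · rw [eq_inv_smul_iff₀ hc, hinv]

theorem dotProduct_inv_mulVec_of_mulVec_eq_smul (hAT : Aᵀ = A) (hA : IsUnit A)
    (hv : A *ᵥ v = c • v) (w : m → K) : v ⬝ᵥ A⁻¹ *ᵥ w = c⁻¹ * (w ⬝ᵥ v) := by
  rw [dotProduct_mulVec, ← mulVec_transpose, transpose_nonsing_inv, hAT,
    inv_mulVec_eq_inv_smul_of_mulVec_eq_smul hA hv, smul_dotProduct, smul_eq_mul, dotProduct_comm]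

end Eigenvector

theorem inv_mul_lt_sq_inv_mul_iff {σ : ℝ} (hσ : 0 < σ) (a b : ℝ) :
    σ⁻¹ * a < (σ⁻¹ * b) ^ 2 ↔ σ * a < b ^ 2 := by
  rw [← mul_lt_mul_iff_of_pos_left (pow_pos hσ 2)]
  field_simp

theorem sq_inv_mul_sub_div_sq {σ : ℝ} (hσ : σ ≠ 0) (a b : ℝ) :
    ((σ⁻¹ * b) ^ 2 - σ⁻¹ * a) / (σ⁻¹ * a) ^ 2 = (b ^ 2 - σ * a) / a ^ 2 := by
  rcases eq_or_ne a 0 with rfl | ha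
  · simp
  · field_simp

theorem sbl_fixed_point_explicit_orthogonal_general (n p : ℕ) (y : Fin n → ℝ)
    (x : Fin p → Fin n → ℝ)
    (horth : ∀ j k, j ≠ k → x j ⬝ᵥ x k = 0)
    (σ2 : ℝ) (hσ : 0 < σ2)
    (γhat : Fin p → ℝ) (hpos : ∀ j, 0 ≤ γhat j)
    (Cj : Fin p → Matrix (Fin n) (Fin n) ℝ)
    (hCj : ∀ j, Cj j = σ2 • (1 : Matrix (Fin n) (Fin n) ℝ) +
      ∑ k ∈ Finset.univ.erase j, γhat k • vecMulVec (x k) (x k))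
    (hfix : ∀ j : Fin p,
      if x j ⬝ᵥ (Cj j)⁻¹.mulVec (x j) < (x j ⬝ᵥ (Cj j)⁻¹.mulVec y)^2
      then γhat j = ((x j ⬝ᵥ (Cj j)⁻¹.mulVec y)^2 - x j ⬝ᵥ (Cj j)⁻¹.mulVec (x j)) /
        (x j ⬝ᵥ (Cj j)⁻¹.mulVec (x j))^2
      else γhat j = 0) :
    ∀ j : Fin p,
      if σ2 * (x j ⬝ᵥ x j) < (y ⬝ᵥ x j)^2
      then γhat j = ((y ⬝ᵥ x j)^2 - σ2 * (x j ⬝ᵥ x j)) / (x j ⬝ᵥ x j)^2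
      else γhat j = 0 := by
  intro j
  have hpd : (Cj j).PosDef :=
    hCj j ▸ posDef_smul_one_add_sum_vecMulVec hσ _ (fun k _ => hpos k) x
  have heigen : Cj j *ᵥ x j = σ2 • x j := hCj j ▸
    smul_one_add_sum_vecMulVec_mulVec_of_orthogonal σ2 _ γhat x
      fun k hk => horth k j (Finset.ne_of_mem_erase hk)
  have hsymm : (Cj j)ᵀ = Cj j := by simpa using hpd.isHermitian.eq
  have hquad := dotProduct_inv_mulVec_of_mulVec_eq_smul hsymm hpd.isUnit heigen
  simpa only [hquad, inv_mul_lt_sq_inv_mul_iff hσ, sq_inv_mul_sub_div_sq hσ.ne'] using hfix j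

/-- Explicit form of the sparse Bayesian learning maximizer under an orthogonal design:
if `γhat ∈ [0,∞)^p` satisfies the coordinatewise fixed-point property (with
`C_j = σ² Iₙ + Σ_{k≠j} γhat_k x_k x_kᵀ`), then
`γhat_j = (⟨y,x_j⟩² - σ²‖x_j‖²)/‖x_j‖⁴` if `⟨y,x_j⟩² > σ²‖x_j‖²` and `γhat_j = 0`
otherwise. -/
theorem sbl_fixed_point_explicit_orthogonal (n p : ℕ) (y : Fin n → ℝ)
    (x : Fin p → Fin n → ℝ)
    (horth : ∀ j k, j ≠ k → x j ⬝ᵥ x k = 0) (hxne : ∀ j, x j ≠ 0)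
    (σ2 : ℝ) (hσ : 0 < σ2)
    (γhat : Fin p → ℝ) (hpos : ∀ j, 0 ≤ γhat j)
    (Cj : Fin p → Matrix (Fin n) (Fin n) ℝ)
    (hCj : ∀ j, Cj j = σ2 • (1 : Matrix (Fin n) (Fin n) ℝ) +
      ∑ k ∈ Finset.univ.erase j, γhat k • vecMulVec (x k) (x k))
    (hfix : ∀ j : Fin p,
      if x j ⬝ᵥ (Cj j)⁻¹.mulVec (x j) < (x j ⬝ᵥ (Cj j)⁻¹.mulVec y)^2
      then γhat j = ((x j ⬝ᵥ (Cj j)⁻¹.mulVec y)^2 - x j ⬝ᵥ (Cj j)⁻¹.mulVec (x j)) /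
        (x j ⬝ᵥ (Cj j)⁻¹.mulVec (x j))^2
      else γhat j = 0) :
    ∀ j : Fin p,
      if σ2 * (x j ⬝ᵥ x j) < (y ⬝ᵥ x j)^2
      then γhat j = ((y ⬝ᵥ x j)^2 - σ2 * (x j ⬝ᵥ x j)) / (x j ⬝ᵥ x j)^2
      else γhat j = 0 :=
  sbl_fixed_point_explicit_orthogonal_general n p y x horth σ2 hσ γhat hpos Cj hCj hfix
end

section
/- Let σ² > 0 and B > 0, define Ψ : [0,∞) → ℝ by Ψ(x) := B (x/(σ²+x))² + σ² x/(σ²+x), and let (x_k) be defined by any x₀ > 0 and x_{k+1} := Ψ(x_k). Then: if B ≤ σ², the sequence (x_k) converges to 0; if B > σ², the sequence (x_k) converges to B − σ². (This is the EM recursion for one hyperparameter under an orthogonal design, with B = ⟨y, x_j⟩²/‖x_j‖² and x_k = ‖x_j‖² γ_j^{(k)}; hence the EM iterates converge to the SBL maximizer.) -/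
/-! Writing `Ψ(x) = x + x² (B - σ² - x) / (σ² + x)²` shows that on `[0, ∞)` the map `Ψ` is
increasing, moves points up exactly below `B - σ²` and down exactly above it, and has
`0` and `B - σ²` as its only fixed points. Hence every orbit starting at `x₀ > 0` is monotone
and bounded, and its limit is a fixed point that can be read off from the side of `B - σ²`
on which the orbit lies. -/

open Filter Topology Set

theorem tendsto_of_monotone_orbit_of_unique_fixedPt {α : Type*} [ConditionallyCompleteLinearOrder α]
    [TopologicalSpace α] [OrderTopology α] {f : α → α} {u : ℕ → α} {a b p : α}
    (hrec : ∀ k, u (k + 1) = f (u k)) (hu : Monotone u ∨ Antitone u)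
    (hmem : ∀ k, u k ∈ Icc a b) (hf : ContinuousOn f (Icc a b))
    (hfix : ∀ x ∈ Icc a b, f x = x → x = p) : Tendsto u atTop (𝓝 p) := by
  obtain ⟨L, hL⟩ : ∃ L, Tendsto u atTop (𝓝 L) := by
    rcases hu with hu | hu
    · exact ⟨_, tendsto_atTop_ciSup hu ⟨b, by rintro _ ⟨k, rfl⟩; exact (hmem k).2⟩⟩
    · exact ⟨_, tendsto_atTop_ciInf hu ⟨a, by rintro _ ⟨k, rfl⟩; exact (hmem k).1⟩⟩
  have hLmem : L ∈ Icc a b := isClosed_Icc.mem_of_tendsto hL (.of_forall hmem)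
  have hfu : Tendsto (f ∘ u) atTop (𝓝 (f L)) :=
    (hf L hLmem).tendsto.comp (tendsto_nhdsWithin_iff.2 ⟨hL, .of_forall hmem⟩)
  have hshift : Tendsto (f ∘ u) atTop (𝓝 L) := by
    simpa only [Function.comp_def, ← hrec] using hL.comp (tendsto_add_atTop_nat 1)
  rwa [← hfix L hLmem (tendsto_nhds_unique hfu hshift)]

/-- The EM update `Ψ` in the rescaled variable `x = ‖x_j‖² γ_j`. -/
noncomputable def emMap (σ2 B x : ℝ) : ℝ :=
  B * (x / (σ2 + x)) ^ 2 + σ2 * x / (σ2 + x)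

section emMap

variable {σ2 B x : ℝ}

theorem emMap_eq_add (hx : σ2 + x ≠ 0) :
    emMap σ2 B x = x + x ^ 2 * (B - σ2 - x) / (σ2 + x) ^ 2 := by
  unfold emMap
  field_simp
  ring

theorem emMap_pos (hσ : 0 < σ2) (hB : 0 ≤ B) (hx : 0 < x) : 0 < emMap σ2 B x := by
  unfold emMap
  positivity

theorem emMap_le_self (hσ : 0 < σ2) (hx : 0 ≤ x) (h : B - σ2 ≤ x) : emMap σ2 B x ≤ x := by
  rw [emMap_eq_add (by positivity)]
  have : x ^ 2 * (B - σ2 - x) / (σ2 + x) ^ 2 ≤ 0 :=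
    div_nonpos_of_nonpos_of_nonneg (mul_nonpos_of_nonneg_of_nonpos (sq_nonneg x) (by linarith))
      (sq_nonneg _)
  linarith

theorem le_emMap_self (hσ : 0 < σ2) (hx : 0 ≤ x) (h : x ≤ B - σ2) : x ≤ emMap σ2 B x := by
  rw [emMap_eq_add (by positivity)]
  have : 0 ≤ x ^ 2 * (B - σ2 - x) / (σ2 + x) ^ 2 :=
    div_nonneg (mul_nonneg (sq_nonneg x) (by linarith)) (sq_nonneg _)
  linarith

theorem emMap_eq_self_iff (hσ : 0 < σ2) (hx : 0 ≤ x) :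
    emMap σ2 B x = x ↔ x = 0 ∨ x = B - σ2 := by
  have hden : (σ2 + x) ^ 2 ≠ 0 := by positivity
  rw [emMap_eq_add (by positivity), add_eq_left, div_eq_zero_iff, or_iff_left hden,
    mul_eq_zero, pow_eq_zero_iff two_ne_zero, sub_eq_zero, eq_comm (a := B - σ2)]

theorem monotoneOn_emMap (hσ : 0 < σ2) (hB : 0 ≤ B) : MonotoneOn (emMap σ2 B) (Ici 0) := by
  intro x (hx : 0 ≤ x) y (hy : 0 ≤ y) hxy
  have hdx : 0 < σ2 + x := by linarith
  have hdy : 0 < σ2 + y := by linarith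
  have hfrac : x / (σ2 + x) ≤ y / (σ2 + y) := by
    rw [div_le_div_iff₀ hdx hdy]
    nlinarith
  unfold emMap
  rw [mul_div_assoc, mul_div_assoc]
  gcongr

theorem continuousOn_emMap (hσ : 0 < σ2) : ContinuousOn (emMap σ2 B) (Ici 0) := by
  have hden : ∀ x ∈ Ici (0 : ℝ), σ2 + x ≠ 0 := fun x (hx : 0 ≤ x) => by positivity
  unfold emMap
  fun_prop (disch := assumption)

end emMap

section orbit

variable {σ2 B : ℝ} {u : ℕ → ℝ}

theorem emMap_orbit_pos (hσ : 0 < σ2) (hB : 0 ≤ B) (h0 : 0 < u 0)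
    (hrec : ∀ k, u (k + 1) = emMap σ2 B (u k)) (k : ℕ) : 0 < u k := by
  induction k with
  | zero => exact h0
  | succ n ih => rw [hrec]; exact emMap_pos hσ hB ih

theorem tendsto_emMap_orbit_zero (hσ : 0 < σ2) (hB : 0 ≤ B) (hBσ : B ≤ σ2) (h0 : 0 < u 0)
    (hrec : ∀ k, u (k + 1) = emMap σ2 B (u k)) : Tendsto u atTop (𝓝 0) := by
  have hpos := emMap_orbit_pos hσ hB h0 hrec
  have hdec (k : ℕ) : u (k + 1) ≤ u k := by
    rw [hrec]
    exact emMap_le_self hσ (hpos k).le (by linarith [hpos k])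
  have hanti : Antitone u := antitone_nat_of_succ_le hdec
  refine tendsto_of_monotone_orbit_of_unique_fixedPt hrec (.inr hanti)
    (fun k => ⟨(hpos k).le, hanti (Nat.zero_le k)⟩)
    ((continuousOn_emMap hσ).mono Icc_subset_Ici_self) fun x hx hfix => ?_
  rcases (emMap_eq_self_iff hσ hx.1).1 hfix with h | h
  · exact h
  · linarith [hx.1]

theorem tendsto_emMap_orbit_sub (hσ : 0 < σ2) (hBσ : σ2 < B) (h0 : 0 < u 0)
    (hrec : ∀ k, u (k + 1) = emMap σ2 B (u k)) : Tendsto u atTop (𝓝 (B - σ2)) := by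
  have hM : 0 < B - σ2 := sub_pos.2 hBσ
  have hpos := emMap_orbit_pos hσ (hσ.trans hBσ).le h0 hrec
  have hfixM : emMap σ2 B (B - σ2) = B - σ2 := (emMap_eq_self_iff hσ hM.le).2 (.inr rfl)
  have hmono := monotoneOn_emMap hσ (hσ.trans hBσ).le
  have hcont := continuousOn_emMap (B := B) hσ
  have hfix : ∀ x, 0 < x → emMap σ2 B x = x → x = B - σ2 := fun x hx h =>
    ((emMap_eq_self_iff hσ hx.le).1 h).resolve_left hx.ne'
  rcases le_total (u 0) (B - σ2) with hbelow | habove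
  · have hle (k : ℕ) : u k ≤ B - σ2 := by
      induction k with
      | zero => exact hbelow
      | succ n ih => rw [hrec, ← hfixM]; exact hmono (hpos n).le hM.le ih
    have hinc : Monotone u :=
      monotone_nat_of_le_succ fun k => (hrec k).symm ▸ le_emMap_self hσ (hpos k).le (hle k)
    exact tendsto_of_monotone_orbit_of_unique_fixedPt hrec (.inl hinc)
      (fun k => ⟨hinc (Nat.zero_le k), hle k⟩) (hcont.mono fun x hx => h0.le.trans hx.1)
      fun x hx => hfix x (h0.trans_le hx.1)
  · have hge (k : ℕ) : B - σ2 ≤ u k := by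
      induction k with
      | zero => exact habove
      | succ n ih => rw [hrec, ← hfixM]; exact hmono hM.le (hpos n).le ih
    have hanti : Antitone u :=
      antitone_nat_of_succ_le fun k => (hrec k).symm ▸ emMap_le_self hσ (hpos k).le (hge k)
    exact tendsto_of_monotone_orbit_of_unique_fixedPt hrec (.inr hanti)
      (fun k => ⟨hge k, hanti (Nat.zero_le k)⟩) (hcont.mono fun x hx => hM.le.trans hx.1)
      fun x hx => hfix x (hM.trans_le hx.1)

end orbit

/-- Convergence of the EM recursion for one hyperparameter under an orthogonal design:
with `Ψ(x) = B (x/(σ²+x))² + σ² x/(σ²+x)` and `x_{k+1} = Ψ(x_k)`, `x₀ > 0`, the sequence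
converges to `0` if `B ≤ σ²` and to `B - σ²` if `B > σ²`. -/
theorem sbl_em_recursion_converges (σ2 B : ℝ) (hσ : 0 < σ2) (hB : 0 < B)
    (Ψ : ℝ → ℝ)
    (hΨ : ∀ x, Ψ x = B * (x / (σ2 + x))^2 + σ2 * x / (σ2 + x))
    (u : ℕ → ℝ) (h0 : 0 < u 0) (hrec : ∀ k, u (k + 1) = Ψ (u k)) :
    (B ≤ σ2 → Filter.Tendsto u Filter.atTop (nhds 0)) ∧
    (σ2 < B → Filter.Tendsto u Filter.atTop (nhds (B - σ2))) := by
  have hrec' (k : ℕ) : u (k + 1) = emMap σ2 B (u k) := (hrec k).trans (hΨ _)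
  exact ⟨fun hBσ => tendsto_emMap_orbit_zero hσ hB.le hBσ h0 hrec',
    fun hBσ => tendsto_emMap_orbit_sub hσ hBσ h0 hrec'⟩
end

section
/- Let σ² > 0 and 0 < B ≤ σ², and define Ψ : [0,∞) → ℝ by Ψ(x) := B (x/(σ²+x))² + σ² x/(σ²+x). Then Ψ is concave on [0,∞) (its second derivative Ψ''(x) = (−2σ²x(σ²+2B) + 2σ⁴(B−σ²))/(σ²+x)⁴ is ≤ 0 for all x ≥ 0), and consequently Ψ(x) ≤ x for all x ≥ 0. -/
/-!
Writing `s = σ² + x`, the map is a constant plus `q / s² - p / s` with `q = B σ⁴` and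
`p = σ² (2B + σ²)`, whose second derivative `2 (3q - p s) / s⁴` is nonpositive for `s ≥ σ²`
exactly when `B ≤ σ²`. The bound `Ψ x ≤ x` is the identity
`x - Ψ x = x² (σ² + x - B) / (σ² + x)²`.
-/

open Set

theorem hasDerivAt_div_sq_sub_div (p q : ℝ) {s : ℝ} (hs : s ≠ 0) :
    HasDerivAt (fun s => q / s ^ 2 - p / s) (p / s ^ 2 - 2 * q / s ^ 3) s := by
  refine (((hasDerivAt_const s q).div (hasDerivAt_pow 2 s) (pow_ne_zero 2 hs)).sub
    ((hasDerivAt_const s p).div (hasDerivAt_id' s) hs)).congr_deriv ?_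
  field_simp
  ring

theorem hasDerivAt_div_sq_sub_div_cube (p q : ℝ) {s : ℝ} (hs : s ≠ 0) :
    HasDerivAt (fun s => p / s ^ 2 - 2 * q / s ^ 3) (6 * q / s ^ 4 - 2 * p / s ^ 3) s := by
  refine (((hasDerivAt_const s p).div (hasDerivAt_pow 2 s) (pow_ne_zero 2 hs)).sub
    ((hasDerivAt_const s (2 * q)).div (hasDerivAt_pow 3 s) (pow_ne_zero 3 hs))).congr_deriv ?_
  field_simp
  ring

theorem concaveOn_div_sq_sub_div {a p q : ℝ} (ha : 0 < a) (hp : 0 ≤ p) (hpq : 3 * q ≤ p * a) :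
    ConcaveOn ℝ (Ici a) fun s => q / s ^ 2 - p / s := by
  have hpos : ∀ s ∈ Ici a, 0 < s := fun s hs => ha.trans_le hs
  refine concaveOn_of_hasDerivWithinAt2_nonpos (convex_Ici a)
    (fun s hs => (hasDerivAt_div_sq_sub_div p q (hpos s hs).ne').continuousAt.continuousWithinAt)
    (fun s hs =>
      (hasDerivAt_div_sq_sub_div p q (hpos s (interior_subset hs)).ne').hasDerivWithinAt)
    (fun s hs =>
      (hasDerivAt_div_sq_sub_div_cube p q (hpos s (interior_subset hs)).ne').hasDerivWithinAt)
    fun s hs => ?_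
  have hs₀ : 0 < s := hpos s (interior_subset hs)
  have hqs : 3 * q ≤ p * s := hpq.trans (mul_le_mul_of_nonneg_left (interior_subset hs) hp)
  calc 6 * q / s ^ 4 - 2 * p / s ^ 3 = 2 * (3 * q - p * s) / s ^ 4 := by field_simp; ring
    _ ≤ 0 := div_nonpos_of_nonpos_of_nonneg (by linarith) (by positivity)

/-- When `0 < B ≤ σ²`, the one-coordinate EM update map
`Ψ(x) = B (x/(σ²+x))² + σ² x/(σ²+x)` is concave on `[0,∞)`, and consequently `Ψ(x) ≤ x`
for all `x ≥ 0`. -/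
theorem sbl_em_map_concave (σ2 B : ℝ) (hσ : 0 < σ2) (hB : 0 < B) (hBσ : B ≤ σ2)
    (Ψ : ℝ → ℝ)
    (hΨ : ∀ x, Ψ x = B * (x / (σ2 + x))^2 + σ2 * x / (σ2 + x)) :
    ConcaveOn ℝ (Set.Ici 0) Ψ ∧ ∀ x : ℝ, 0 ≤ x → Ψ x ≤ x := by
  refine ⟨?_, fun x hx => ?_⟩
  · have hpartial : EqOn
        ((fun s => B * σ2 ^ 2 / s ^ 2 - σ2 * (2 * B + σ2) / s) ∘ (σ2 + ·) + fun _ => B + σ2)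
        Ψ (Ici 0) := fun x (hx : 0 ≤ x) => by
      have : σ2 + x ≠ 0 := by positivity
      simp only [Pi.add_apply, Function.comp_apply, hΨ]
      field_simp
      ring
    have hconc := ((concaveOn_div_sq_sub_div (p := σ2 * (2 * B + σ2)) (q := B * σ2 ^ 2) hσ
      (by positivity) (by nlinarith)).translate_right σ2).add_const (B + σ2)
    rw [preimage_const_add_Ici, sub_self] at hconc
    exact hconc.congr hpartial
  · have hgap : x - Ψ x = x ^ 2 * (σ2 + x - B) / (σ2 + x) ^ 2 := by
      have : σ2 + x ≠ 0 := by positivity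
      rw [hΨ]
      field_simp
      ring
    have : 0 ≤ x ^ 2 * (σ2 + x - B) / (σ2 + x) ^ 2 :=
      div_nonneg (mul_nonneg (sq_nonneg x) (by linarith)) (sq_nonneg _)
    linarith
end

section
/- Let σ² > 0 and B > σ², and define Ψ : [0,∞) → ℝ by Ψ(x) := B (x/(σ²+x))² + σ² x/(σ²+x). Then the fixed points of Ψ in [0,∞) are exactly 0 and x⋆ := B − σ²; moreover Ψ(x) ≥ x for all x ∈ [0, x⋆] and Ψ(x) < x for all x > x⋆; and Ψ(x) ∈ [0, σ² + B] for all x ≥ 0. -/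
/-! Everything follows from the identity `Ψ x - x = x² (x⋆ - x) / (σ² + x)²`: the sign of
`Ψ x - x` is the sign of `x⋆ - x` away from `x = 0`. The range bound holds because
`x / (σ² + x) ∈ [0, 1]`. -/

open Set

noncomputable def sblEMUpdate (σ2 B x : ℝ) : ℝ :=
  B * (x / (σ2 + x)) ^ 2 + σ2 * x / (σ2 + x)

section

variable {σ2 B x : ℝ}

theorem sblEMUpdate_sub_self (h : σ2 + x ≠ 0) :
    sblEMUpdate σ2 B x - x = x ^ 2 * (B - σ2 - x) / (σ2 + x) ^ 2 := by
  unfold sblEMUpdate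
  field_simp
  ring

theorem sblEMUpdate_eq_self_iff (h : σ2 + x ≠ 0) :
    sblEMUpdate σ2 B x = x ↔ x = 0 ∨ x = B - σ2 := by
  rw [← sub_eq_zero, sblEMUpdate_sub_self h, div_eq_zero_iff, mul_eq_zero, sub_sub,
    sub_eq_zero, eq_comm (a := B), eq_sub_iff_add_eq, add_comm x]
  simp [h]

theorem le_sblEMUpdate (h : σ2 + x ≠ 0) (hx : x ≤ B - σ2) : x ≤ sblEMUpdate σ2 B x := by
  have hdiff : 0 ≤ x ^ 2 * (B - σ2 - x) / (σ2 + x) ^ 2 :=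
    div_nonneg (mul_nonneg (sq_nonneg x) (by linarith)) (sq_nonneg _)
  rw [← sblEMUpdate_sub_self h] at hdiff
  linarith

theorem sblEMUpdate_lt (h : σ2 + x ≠ 0) (hx₀ : x ≠ 0) (hx : B - σ2 < x) :
    sblEMUpdate σ2 B x < x := by
  have hdiff : x ^ 2 * (B - σ2 - x) / (σ2 + x) ^ 2 < 0 :=
    div_neg_of_neg_of_pos (mul_neg_of_pos_of_neg (by positivity) (by linarith)) (by positivity)
  rw [← sblEMUpdate_sub_self h] at hdiff
  linarith

theorem sblEMUpdate_mem_Icc (hσ : 0 ≤ σ2) (hB : 0 ≤ B) (hx : 0 ≤ x) :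
    sblEMUpdate σ2 B x ∈ Icc 0 (σ2 + B) := by
  have ht₀ : 0 ≤ x / (σ2 + x) := by positivity
  have ht₁ : x / (σ2 + x) ≤ 1 := div_le_one_of_le₀ (by linarith) (by positivity)
  have hsq : B * (x / (σ2 + x)) ^ 2 ≤ B :=
    mul_le_of_le_one_right hB (pow_le_one₀ ht₀ ht₁)
  have hlin : σ2 * x / (σ2 + x) ≤ σ2 := by
    rw [mul_div_assoc]
    exact mul_le_of_le_one_right hσ ht₁
  unfold sblEMUpdate
  exact ⟨by positivity, by linarith⟩

end

/-- When `B > σ² > 0`, the fixed points of the one-coordinate EM update map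
`Ψ(x) = B (x/(σ²+x))² + σ² x/(σ²+x)` in `[0,∞)` are exactly `0` and `x⋆ = B - σ²`;
moreover `Ψ(x) ≥ x` on `[0, x⋆]`, `Ψ(x) < x` for `x > x⋆`, and `Ψ(x) ∈ [0, σ² + B]`
for all `x ≥ 0`. -/
theorem sbl_em_map_fixed_points (σ2 B : ℝ) (hσ : 0 < σ2) (hB : σ2 < B)
    (Ψ : ℝ → ℝ)
    (hΨ : ∀ x, Ψ x = B * (x / (σ2 + x))^2 + σ2 * x / (σ2 + x)) :
    (∀ x : ℝ, 0 ≤ x → (Ψ x = x ↔ x = 0 ∨ x = B - σ2)) ∧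
    (∀ x : ℝ, 0 ≤ x → x ≤ B - σ2 → x ≤ Ψ x) ∧
    (∀ x : ℝ, B - σ2 < x → Ψ x < x) ∧
    (∀ x : ℝ, 0 ≤ x → Ψ x ∈ Set.Icc 0 (σ2 + B)) := by
  obtain rfl : Ψ = sblEMUpdate σ2 B := funext hΨ
  have hden : ∀ x : ℝ, 0 ≤ x → σ2 + x ≠ 0 := fun x hx => by positivity
  refine ⟨fun x hx => sblEMUpdate_eq_self_iff (hden x hx),
    fun x hx => le_sblEMUpdate (hden x hx), fun x hx => ?_,
    fun x hx => sblEMUpdate_mem_Icc hσ.le (by linarith) hx⟩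
  have hx₀ : 0 < x := by linarith
  exact sblEMUpdate_lt (hden x hx₀.le) hx₀.ne' hx
end

section
/- Let Z be a standard Gaussian random variable (law gaussianReal 0 1). Then for every integer k ≥ 2, E[ |Z² − 1|^k ] ≤ k! · 2^{k−2}. -/
/-!
Write `m n = E[(Z² - 1)^n]`. Gaussian integration by parts, `E[Z g(Z)] = E[g'(Z)]` applied to
`g(x) = x (x² - 1)^(n+1)`, gives `m (n+2) = (2n+2) (m (n+1) + m n)` with `m 0 = 1`, `m 1 = 0`, and
an induction along this recursion bounds `m (n+2)` by slightly less than `(n+2)! 2^n`. This settles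
even `k`, where `|Z² - 1|^k = (Z² - 1)^k`. For odd `k`, the pointwise inequality
`2t|y|^k ≤ t² y^(k-1) + y^(k+1)` with `t = 2k` reduces `E|Z² - 1|^k` to the even moments
`m (k ± 1)`.
-/

open MeasureTheory ProbabilityTheory Real
open scoped NNReal Nat

section Gaussian

variable {μ : ℝ} {v : ℝ≥0}

lemma integrable_gaussianReal_iff {f : ℝ → ℝ} (hv : v ≠ 0) :
    Integrable f (gaussianReal μ v) ↔ Integrable (fun x ↦ gaussianPDFReal μ v x * f x) := by
  rw [gaussianReal_of_var_ne_zero _ hv, integrable_withDensity_iff_integrable_smul'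
    (measurable_gaussianPDF μ v) (ae_of_all _ fun _ ↦ gaussianPDF_lt_top)]
  simp [toReal_gaussianPDF]

lemma hasDerivAt_gaussianPDFReal (x : ℝ) :
    HasDerivAt (gaussianPDFReal μ v) (-((x - μ) / v) * gaussianPDFReal μ v x) x := by
  have h : HasDerivAt (fun x ↦ -(x - μ) ^ 2 / (2 * v)) (-((x - μ) / v)) x :=
    ((((hasDerivAt_id x).sub_const μ).pow 2).neg.div_const (2 * (v : ℝ))).congr_deriv
      (by simp only [id, Nat.cast_ofNat]; ring)
  exact ((h.exp).const_mul (√(2 * π * v))⁻¹).congr_deriv (by rw [gaussianPDFReal]; ring)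

lemma integrable_pow_gaussianReal (n : ℕ) : Integrable (fun x ↦ x ^ n) (gaussianReal μ v) :=
  ((memLp_id_gaussianReal n).integrable_norm_pow').mono' (by fun_prop) (by simp)

lemma integrable_eval_gaussianReal (p : Polynomial ℝ) :
    Integrable (fun x ↦ p.eval x) (gaussianReal μ v) := by
  simp only [Polynomial.eval_eq_sum_range]
  exact integrable_finsetSum _ fun i _ ↦ (integrable_pow_gaussianReal i).const_mul _

theorem integral_sub_mul_gaussianReal {g g' : ℝ → ℝ} (hg : ∀ x, HasDerivAt g (g' x) x)
    (hg_int : Integrable g (gaussianReal μ v)) (hg'_int : Integrable g' (gaussianReal μ v))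
    (hxg_int : Integrable (fun x ↦ (x - μ) * g x) (gaussianReal μ v)) :
    ∫ x, (x - μ) * g x ∂gaussianReal μ v = v * ∫ x, g' x ∂gaussianReal μ v := by
  rcases eq_or_ne v 0 with rfl | hv
  · simp
  rw [integrable_gaussianReal_iff hv] at hg_int hg'_int hxg_int
  have hderiv : ∀ x, HasDerivAt (fun x ↦ gaussianPDFReal μ v x * g x)
      (gaussianPDFReal μ v x * g' x - (v : ℝ)⁻¹ * (gaussianPDFReal μ v x * ((x - μ) * g x))) x :=
    fun x ↦ ((hasDerivAt_gaussianPDFReal x).mul (hg x)).congr_deriv (by ring)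
  have h := integral_eq_zero_of_hasDerivAt_of_integrable hderiv
    (hg'_int.sub (hxg_int.const_mul _)) hg_int
  rw [integral_sub hg'_int (hxg_int.const_mul _), integral_const_mul, sub_eq_zero] at h
  simp only [integral_gaussianReal_eq_integral_smul hv, smul_eq_mul]
  rw [h, ← mul_assoc, mul_inv_cancel₀ (NNReal.coe_ne_zero.mpr hv), one_mul]

open Polynomial in
lemma integrable_pow_mul_sq_sub_one_pow_gaussianReal (a n : ℕ) :
    Integrable (fun x ↦ x ^ a * (x ^ 2 - 1) ^ n) (gaussianReal μ v) := by
  have h := integrable_eval_gaussianReal (μ := μ) (v := v) (X ^ a * (X ^ 2 - 1) ^ n)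
  simp only [eval_mul, eval_pow, eval_sub, eval_X, eval_one] at h
  exact h

lemma integrable_sq_sub_one_pow_gaussianReal (n : ℕ) :
    Integrable (fun x ↦ (x ^ 2 - 1) ^ n) (gaussianReal μ v) := by
  simpa using integrable_pow_mul_sq_sub_one_pow_gaussianReal (μ := μ) (v := v) 0 n

end Gaussian

lemma two_mul_integral_abs_pow_succ_le {α : Type*} [MeasurableSpace α] {μ : Measure α}
    {f : α → ℝ} {n : ℕ} (hn : Even n) {t : ℝ} (ht : 0 ≤ t)
    (h₀ : Integrable (fun a ↦ f a ^ n) μ) (h₂ : Integrable (fun a ↦ f a ^ (n + 2)) μ) :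
    2 * t * ∫ a, |f a| ^ (n + 1) ∂μ ≤ t ^ 2 * ∫ a, f a ^ n ∂μ + ∫ a, f a ^ (n + 2) ∂μ := by
  rw [← integral_const_mul, ← integral_const_mul, ← integral_add (h₀.const_mul _) h₂]
  refine integral_mono_of_nonneg (ae_of_all _ fun a ↦ by positivity) ((h₀.const_mul _).add h₂)
    (ae_of_all _ fun a ↦ ?_)
  have h := mul_nonneg (pow_nonneg (abs_nonneg (f a)) n) (sq_nonneg (t - |f a|))
  dsimp only
  rw [← hn.pow_abs, ← (hn.add even_two).pow_abs]
  linear_combination h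

noncomputable def chiSqCentralMoment (n : ℕ) : ℝ := ∫ x, (x ^ 2 - 1) ^ n ∂gaussianReal 0 1

lemma chiSqCentralMoment_zero : chiSqCentralMoment 0 = 1 := by
  simp [chiSqCentralMoment]

lemma chiSqCentralMoment_one : chiSqCentralMoment 1 = 0 := by
  have h := integral_sub_mul_gaussianReal (μ := 0) (v := 1) (g := fun x ↦ x) (g' := fun _ ↦ 1)
    hasDerivAt_id' (by simpa using integrable_pow_gaussianReal 1) (integrable_const 1)
    (by simpa [← sq] using integrable_pow_gaussianReal 2)
  simp only [sub_zero, ← sq, integral_const, probReal_univ, smul_eq_mul, NNReal.coe_one,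
    one_mul] at h
  simp only [chiSqCentralMoment, pow_one]
  rw [integral_sub (integrable_pow_gaussianReal 2) (integrable_const 1), h]
  simp

lemma chiSqCentralMoment_add_two (n : ℕ) :
    chiSqCentralMoment (n + 2) =
      (2 * n + 2) * (chiSqCentralMoment (n + 1) + chiSqCentralMoment n) := by
  have hint := integrable_sq_sub_one_pow_gaussianReal (μ := 0) (v := 1)
  have hderiv : ∀ x : ℝ, HasDerivAt (fun x ↦ x * (x ^ 2 - 1) ^ (n + 1))
      ((2 * n + 3) * (x ^ 2 - 1) ^ (n + 1) + (2 * n + 2) * (x ^ 2 - 1) ^ n) x := fun x ↦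
    ((hasDerivAt_id' x).mul (((hasDerivAt_pow 2 x).sub_const 1).pow (n + 1))).congr_deriv
      (by simp only [Pi.pow_apply]; push_cast; ring)
  have hxg : (fun x : ℝ ↦ (x - 0) * (x * (x ^ 2 - 1) ^ (n + 1)))
      = fun x ↦ (x ^ 2 - 1) ^ (n + 2) + (x ^ 2 - 1) ^ (n + 1) := by
    funext x; ring
  have h := integral_sub_mul_gaussianReal hderiv
    (by simpa using integrable_pow_mul_sq_sub_one_pow_gaussianReal 1 (n + 1))
    (((hint (n + 1)).const_mul _).add ((hint n).const_mul _))
    (by rw [hxg]; exact (hint (n + 2)).add (hint (n + 1)))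
  rw [hxg, integral_add (hint _) (hint _),
    integral_add ((hint _).const_mul _) ((hint _).const_mul _),
    integral_const_mul, integral_const_mul] at h
  simp only [chiSqCentralMoment]
  push_cast at h
  linarith

/-- Sharper than `chiSqCentralMoment (n + 2) ≤ (n + 2)! * 2 ^ n` by the factor `(n + 4) / (2n + 4)`;
the slack is what lets the induction close, and what the odd moments use. -/
lemma four_mul_chiSqCentralMoment_le (n : ℕ) :
    4 * chiSqCentralMoment (n + 2) ≤ (n + 1)! * 2 ^ (n + 1) * (n + 4) := by
  suffices h : ∀ n : ℕ, 4 * chiSqCentralMoment (n + 2) ≤ (n + 1)! * 2 ^ (n + 1) * (n + 4) ∧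
      4 * chiSqCentralMoment (n + 3) ≤ (n + 2)! * 2 ^ (n + 2) * (n + 5) from (h n).1
  intro n
  induction n with
  | zero =>
    norm_num [chiSqCentralMoment_add_two, chiSqCentralMoment_one, chiSqCentralMoment_zero,
      Nat.factorial]
  | succ n ih =>
    obtain ⟨h₂, h₃⟩ := ih
    refine ⟨by push_cast; linarith, ?_⟩
    set F : ℝ := (n + 1)! * 2 ^ (n + 1)
    have hF : 0 < F := by positivity
    have h₃' : 4 * chiSqCentralMoment (n + 3) ≤ 2 * (n + 2) * (n + 5) * F := by
      convert h₃ using 1; push_cast [F, Nat.factorial_succ]; ring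
    have hrhs : ((n + 1 + 2)! : ℝ) * 2 ^ (n + 1 + 2) * ((n + 1 : ℕ) + 5)
        = 4 * (n + 2) * (n + 3) * (n + 6) * F := by
      push_cast [F, Nat.factorial_succ]; ring
    rw [hrhs, show n + 1 + 3 = (n + 2) + 2 by ring, chiSqCentralMoment_add_two]
    calc 4 * ((2 * ((n + 2 : ℕ) : ℝ) + 2) *
          (chiSqCentralMoment (n + 2 + 1) + chiSqCentralMoment (n + 2)))
        = (2 * n + 6) * (4 * chiSqCentralMoment (n + 3) + 4 * chiSqCentralMoment (n + 2)) := by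
          push_cast; ring
      _ ≤ (2 * n + 6) * (2 * (n + 2) * (n + 5) * F + F * (n + 4)) := by gcongr ?_ * (?_ + ?_)
      _ ≤ 4 * (n + 2) * (n + 3) * (n + 6) * F := by
          have : (0 : ℝ) ≤ (n + 3) * n * F := by positivity
          nlinarith

lemma chiSqCentralMoment_le (n : ℕ) : chiSqCentralMoment (n + 2) ≤ ((n + 2)! : ℝ) * 2 ^ n := by
  have h := four_mul_chiSqCentralMoment_le n
  have hF : (0 : ℝ) ≤ (n + 1)! * 2 ^ n := by positivity
  have hrhs : ((n + 2)! : ℝ) * 2 ^ n = (n + 2) * ((n + 1)! * 2 ^ n) := by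
    push_cast [Nat.factorial_succ]; ring
  rw [pow_succ] at h
  rw [hrhs]
  nlinarith

lemma integral_abs_sq_sub_one_pow_le_of_odd {n : ℕ} (hn : Odd n) :
    ∫ x, |x ^ 2 - 1| ^ (n + 2) ∂gaussianReal 0 1 ≤ ((n + 2)! : ℝ) * 2 ^ n := by
  obtain ⟨i, rfl⟩ := hn
  have hint := integrable_sq_sub_one_pow_gaussianReal (μ := 0) (v := 1)
  set E := ∫ x, |x ^ 2 - 1| ^ (2 * i + 1 + 2) ∂gaussianReal 0 1
  -- `t = 2k` for `k = 2i + 3` is close to the optimal `t = √(m (k + 1) / m (k - 1))`.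
  have hamgm : 4 * (2 * i + 3) * E
      ≤ 4 * (2 * i + 3) ^ 2 * chiSqCentralMoment (2 * i + 2) + chiSqCentralMoment (2 * i + 4) :=
    calc 4 * (2 * i + 3) * E = 2 * (2 * (2 * i + 3)) * E := by ring
      _ ≤ _ := two_mul_integral_abs_pow_succ_le (f := fun x ↦ x ^ 2 - 1) ⟨i + 1, by ring⟩
          (by positivity) (hint _) (hint _)
      _ = _ := by rw [chiSqCentralMoment, chiSqCentralMoment]; ring
  set F : ℝ := (2 * i + 1)! * 2 ^ (2 * i + 1)
  have hF : 0 < F := by positivity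
  have h₁ : 4 * chiSqCentralMoment (2 * i + 2) ≤ (2 * i + 4) * F := by
    convert four_mul_chiSqCentralMoment_le (2 * i) using 1; push_cast; ring
  have h₂ : 4 * chiSqCentralMoment (2 * i + 4)
      ≤ 4 * (2 * i + 3) * (2 * i + 2) * (2 * i + 6) * F := by
    convert four_mul_chiSqCentralMoment_le (2 * i + 2) using 1
    push_cast [F, Nat.factorial_succ]; ring
  have hrhs : ((2 * i + 1 + 2)! : ℝ) * 2 ^ (2 * i + 1) = (2 * i + 3) * (2 * i + 2) * F := by
    push_cast [F, Nat.factorial_succ]; ring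
  rw [hrhs]
  refine le_of_mul_le_mul_left ?_ (by positivity : (0 : ℝ) < 4 * (2 * i + 3))
  have h₁' := mul_le_mul_of_nonneg_left h₁ (sq_nonneg (2 * (i : ℝ) + 3))
  have hgap : 0 ≤ (2 * i + 3) * F * (8 * i ^ 2 + 10 * i) := by positivity
  linarith

/-- Moment bound for a standard Gaussian `Z`: for every integer `k ≥ 2`,
`E[|Z² - 1|^k] ≤ k! 2^{k-2}`. -/
theorem gaussian_centered_chisq_moment_bound (k : ℕ) (hk : 2 ≤ k) :
    ∫ z : ℝ, |z^2 - 1|^k ∂(gaussianReal 0 1) ≤ (k.factorial : ℝ) * 2^(k - 2) := by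
  obtain ⟨n, rfl⟩ : ∃ n, k = n + 2 := ⟨k - 2, by omega⟩
  rw [Nat.add_sub_cancel]
  rcases Nat.even_or_odd n with hn | hn
  · simp_rw [(hn.add even_two).pow_abs]
    exact chiSqCentralMoment_le n
  · exact integral_abs_sq_sub_one_pow_le_of_odd hn
end

section
/- Let Z be a standard Gaussian random variable, let κ ∈ (0, 1/2) and z ≥ 0. Then E[ exp( κ Z² · 1{Z² > 1 + z} ) ] ≤ 1 + exp( − z(1 − 2κ)/2 ) / (1 − 2κ), where 1{·} denotes the indicator function. -/
/-!
Off the event `Z² > 1 + z` the integrand is `1`, so the expectation is at most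
`1 + E[exp(κ Z²); |Z| > t]` with `t = √(1 + z) ≥ 1`. Against the Gaussian density this is
`(2π)^(-1/2) ∫_{|x| > t} exp(-a x²) dx` with `a = 1/2 - κ > 0`, and bounding `1 ≤ x / t` on the
tail gives the Mills-ratio estimate `∫_t^∞ exp(-a x²) dx ≤ exp(-a t²) / (2 a t)`. What remains is
`2 exp(-a) ≤ √(2π) t`.
-/

open MeasureTheory ProbabilityTheory Real Set Filter

theorem integral_Ioi_mul_exp_neg_mul_sq {a : ℝ} (ha : 0 < a) (t : ℝ) :
    ∫ x in Ioi t, x * exp (-a * x ^ 2) = exp (-a * t ^ 2) / (2 * a) := by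
  have hderiv (x : ℝ) :
      HasDerivAt (fun y ↦ -exp (-a * y ^ 2) / (2 * a)) (x * exp (-a * x ^ 2)) x := by
    refine (((hasDerivAt_pow 2 x).const_mul (-a)).exp.neg.div_const (2 * a)).congr_deriv ?_
    field_simp
    ring
  have hlim : Tendsto (fun y : ℝ ↦ -exp (-a * y ^ 2) / (2 * a)) atTop (nhds 0) := by
    simpa using (tendsto_exp_atBot.comp
      ((tendsto_pow_atTop two_ne_zero).const_mul_atTop_of_neg (neg_lt_zero.2 ha))).neg.div_const
        (2 * a)
  rw [integral_Ioi_of_hasDerivAt_of_tendsto' (fun x _ ↦ hderiv x)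
    (integrable_mul_exp_neg_mul_sq ha).integrableOn hlim]
  ring

theorem integral_Ioi_exp_neg_mul_sq_le {a t : ℝ} (ha : 0 < a) (ht : 0 < t) :
    ∫ x in Ioi t, exp (-a * x ^ 2) ≤ exp (-a * t ^ 2) / (2 * a * t) :=
  calc ∫ x in Ioi t, exp (-a * x ^ 2)
      ≤ ∫ x in Ioi t, t⁻¹ * (x * exp (-a * x ^ 2)) := by
        refine setIntegral_mono_on (integrable_exp_neg_mul_sq ha).integrableOn
          ((integrable_mul_exp_neg_mul_sq ha).const_mul _).integrableOn measurableSet_Ioi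
          fun x hx ↦ ?_
        rw [← mul_assoc]
        exact le_mul_of_one_le_left (exp_pos _).le ((one_le_inv_mul₀ ht).2 (le_of_lt hx))
    _ = exp (-a * t ^ 2) / (2 * a * t) := by
        rw [integral_const_mul, integral_Ioi_mul_exp_neg_mul_sq ha]
        field_simp

theorem measurableSet_lt_abs (t : ℝ) : MeasurableSet {x : ℝ | t < |x|} :=
  measurableSet_lt measurable_const continuous_abs.measurable

theorem setIntegral_comp_abs {t : ℝ} (ht : 0 ≤ t) (f : ℝ → ℝ) :
    ∫ x in {x | t < |x|}, f |x| = 2 * ∫ x in Ioi t, f x := by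
  rw [← integral_indicator (measurableSet_lt_abs t)]
  change ∫ x, (Ioi t).indicator f |x| = _
  rw [integral_comp_abs, setIntegral_indicator measurableSet_Ioi, Ioi_inter_Ioi, max_eq_right ht]

theorem setOf_lt_sq_eq_setOf_sqrt_lt_abs {c : ℝ} (hc : 0 ≤ c) :
    {x : ℝ | c < x ^ 2} = {x | √c < |x|} := by
  ext x
  rw [mem_ofPred_eq, mem_ofPred_eq, ← sqrt_sq_eq_abs, sqrt_lt_sqrt_iff hc]

theorem integral_exp_indicator_le {Ω : Type*} [MeasurableSpace Ω] {μ : Measure Ω}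
    [IsProbabilityMeasure μ] {s : Set Ω} (hs : MeasurableSet s) (f : Ω → ℝ) :
    ∫ x, exp (s.indicator f x) ∂μ ≤ 1 + ∫ x in s, exp (f x) ∂μ := by
  by_cases hf : IntegrableOn (fun x ↦ exp (f x)) s μ
  · have hint : Integrable (fun x ↦ 1 + s.indicator (fun x ↦ exp (f x)) x) μ :=
      (integrable_const 1).add (hf.integrable_indicator hs)
    calc ∫ x, exp (s.indicator f x) ∂μ ≤ ∫ x, (1 + s.indicator (fun x ↦ exp (f x)) x) ∂μ :=
          integral_mono_of_nonneg (ae_of_all _ fun x ↦ (exp_pos _).le) hint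
            (ae_of_all _ fun x ↦ by by_cases hx : x ∈ s <;> simp [hx])
      _ = 1 + ∫ x in s, exp (f x) ∂μ := by
          rw [integral_add (integrable_const 1) (hf.integrable_indicator hs),
            integral_indicator hs, integral_const, probReal_univ, one_smul]
  · -- both integrals take the junk value `0`
    have hf' : ¬Integrable (fun x ↦ exp (s.indicator f x)) μ := fun h ↦
      hf (h.integrableOn.congr_fun (fun x hx ↦ by simp [hx]) hs)
    rw [integral_undef hf', integral_undef hf]
    norm_num

theorem setIntegral_exp_mul_sq_gaussianReal (κ : ℝ) {s : Set ℝ} (hs : MeasurableSet s) :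
    ∫ x in s, exp (κ * x ^ 2) ∂gaussianReal 0 1
      = (√(2 * π))⁻¹ * ∫ x in s, exp (-(1 / 2 - κ) * x ^ 2) := by
  rw [← integral_indicator hs, integral_gaussianReal_eq_integral_smul one_ne_zero,
    ← integral_const_mul, ← integral_indicator hs]
  congr 1 with x
  by_cases hx : x ∈ s
  · simp only [indicator_of_mem hx, gaussianPDFReal, NNReal.coe_one, mul_one, sub_zero,
      smul_eq_mul, mul_assoc, ← exp_add]
    ring_nf
  · simp [hx]

theorem setIntegral_abs_gt_exp_mul_sq_gaussianReal_le {κ t : ℝ} (hκ : κ < 1 / 2) (ht : 0 < t) :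
    ∫ x in {x | t < |x|}, exp (κ * x ^ 2) ∂gaussianReal 0 1
      ≤ (√(2 * π))⁻¹ * exp (-(1 / 2 - κ) * t ^ 2) / ((1 / 2 - κ) * t) := by
  have ha : 0 < 1 / 2 - κ := by linarith
  have hsymm : ∫ x in {x | t < |x|}, exp (-(1 / 2 - κ) * x ^ 2)
      = 2 * ∫ x in Ioi t, exp (-(1 / 2 - κ) * x ^ 2) := by
    rw [← setIntegral_comp_abs ht.le (fun x ↦ exp (-(1 / 2 - κ) * x ^ 2))]
    simp only [sq_abs]
  rw [setIntegral_exp_mul_sq_gaussianReal κ (measurableSet_lt_abs t), hsymm]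
  calc (√(2 * π))⁻¹ * (2 * ∫ x in Ioi t, exp (-(1 / 2 - κ) * x ^ 2))
      ≤ (√(2 * π))⁻¹ * (2 * (exp (-(1 / 2 - κ) * t ^ 2) / (2 * (1 / 2 - κ) * t))) := by
        gcongr
        exact integral_Ioi_exp_neg_mul_sq_le ha ht
    _ = _ := by field_simp

theorem two_mul_inv_sqrt_two_mul_pi_le_one : 2 * (√(2 * π))⁻¹ ≤ 1 := by
  rw [← div_eq_mul_inv, div_le_one (by positivity), Real.le_sqrt (by norm_num) (by positivity)]
  nlinarith [pi_gt_three]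

theorem gaussian_truncated_exp_moment_bound_general (κ z : ℝ)
    (hκ : κ < 1/2) (hz : 0 ≤ z) :
    ∫ w : ℝ, Real.exp (κ * w^2 * (if 1 + z < w^2 then 1 else 0)) ∂(gaussianReal 0 1)
      ≤ 1 + Real.exp (-(z * (1 - 2*κ)) / 2) / (1 - 2*κ) := by
  set t := √(1 + z)
  have ht : 1 ≤ t := Real.one_le_sqrt.2 (by linarith)
  have hind (w : ℝ) : κ * w ^ 2 * (if 1 + z < w ^ 2 then 1 else 0)
      = {w : ℝ | t < |w|}.indicator (fun w ↦ κ * w ^ 2) w := by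
    rw [← setOf_lt_sq_eq_setOf_sqrt_lt_abs (by linarith)]
    split_ifs with h <;> simp [h]
  have hconst : 2 * (√(2 * π))⁻¹ * exp (-(1 / 2 - κ)) ≤ t :=
    (mul_le_one₀ two_mul_inv_sqrt_two_mul_pi_le_one (exp_pos _).le
      (exp_le_one_iff.2 (by linarith))).trans ht
  calc ∫ w, exp (κ * w ^ 2 * (if 1 + z < w ^ 2 then 1 else 0)) ∂gaussianReal 0 1
      ≤ 1 + ∫ w in {w | t < |w|}, exp (κ * w ^ 2) ∂gaussianReal 0 1 := by
        simp_rw [hind]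
        exact integral_exp_indicator_le (measurableSet_lt_abs t) _
    _ ≤ 1 + (√(2 * π))⁻¹ * exp (-(1 / 2 - κ) * t ^ 2) / ((1 / 2 - κ) * t) := by
        gcongr
        exact setIntegral_abs_gt_exp_mul_sq_gaussianReal_le hκ (by positivity)
    _ = 1 + 2 * (√(2 * π))⁻¹ * exp (-(1 / 2 - κ)) / t
          * (exp (-(z * (1 - 2 * κ)) / 2) / (1 - 2 * κ)) := by
        rw [sq_sqrt (by linarith),
          show -(1 / 2 - κ) * (1 + z) = -(1 / 2 - κ) + -(z * (1 - 2 * κ)) / 2 by ring, exp_add]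
        field_simp
    _ ≤ 1 + exp (-(z * (1 - 2 * κ)) / 2) / (1 - 2 * κ) := by
        gcongr 1 + ?_
        exact mul_le_of_le_one_left (div_nonneg (exp_pos _).le (by linarith))
          (div_le_one_of_le₀ hconst (by positivity))

/-- Truncated exponential moment bound for a standard Gaussian `Z`: for `κ ∈ (0, 1/2)`
and `z ≥ 0`, `E[exp(κ Z² 1{Z² > 1 + z})] ≤ 1 + exp(-z(1-2κ)/2)/(1-2κ)`. -/
theorem gaussian_truncated_exp_moment_bound (κ z : ℝ)
    (hκ0 : 0 < κ) (hκ : κ < 1/2) (hz : 0 ≤ z) :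
    ∫ w : ℝ, Real.exp (κ * w^2 * (if 1 + z < w^2 then 1 else 0)) ∂(gaussianReal 0 1)
      ≤ 1 + Real.exp (-(z * (1 - 2*κ)) / 2) / (1 - 2*κ) :=
  gaussian_truncated_exp_moment_bound_general κ z hκ hz
end

section
/- Let Z₁,…,Z_p be i.i.d. standard Gaussian random variables, let c₀ ≥ 2, κ ∈ (0, 1/2), and set z⋆ := c₀ log p. Then P[ Σ_{j=1}^p Z_j² · 1{Z_j² > 1 + z⋆} > 4 κ^{−1} p^{c₀ κ} ] ≤ exp( − p^{c₀ κ} ). -/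
/-!
Chernoff's bound with parameter `t = 3κ/4`. The moment generating function of the sum factorises
over the independent coordinates, and for one standard Gaussian and `a ≥ 0`
`E exp(t Z² 1{Z² > a}) ≤ 1 + E[e^{tZ²}; Z² > a] ≤ exp((1-2t)^{-1/2} e^{-(1-2t)a/2})`,
where the tail integral is controlled by `e^{-bx²} ≤ e^{-ba} e^{-b(x-√a)²}` on `x ≥ √a`.
With `a = 1 + c₀ log p` and `1 - 2t ≥ 1/4` the exponent is at most
`-3p^{c₀κ} + 2p^{1-c₀(1-2t)/2} ≤ -p^{c₀κ}`, because `c₀ (κ + (1-2t)/2) ≥ 1`.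
-/

open MeasureTheory ProbabilityTheory
open Real Set
open scoped ENNReal

lemma measure_lt_le_exp_neg_mul_mul_lintegral_exp {α : Type*} [MeasurableSpace α]
    (μ : Measure α) {F : α → ℝ} (hF : AEMeasurable F μ) {t : ℝ} (ht : 0 ≤ t) (M : ℝ) :
    μ {ω | M < F ω} ≤
      ENNReal.ofReal (exp (-(t * M))) * ∫⁻ ω, ENNReal.ofReal (exp (t * F ω)) ∂μ := by
  have hsub : {ω | M < F ω} ⊆
      {ω | ENNReal.ofReal (exp (t * M)) ≤ ENNReal.ofReal (exp (t * F ω))} := fun ω hω =>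
    ENNReal.ofReal_le_ofReal (exp_le_exp.2 (mul_le_mul_of_nonneg_left hω.le ht))
  refine (measure_mono hsub).trans ?_
  rw [exp_neg, ENNReal.ofReal_inv_of_pos (exp_pos _), ← ENNReal.div_eq_inv_mul]
  exact meas_ge_le_lintegral_div (measurable_exp.comp_aemeasurable (hF.const_mul t)).ennreal_ofReal
    (by simp [exp_pos]) ENNReal.ofReal_ne_top

lemma lintegral_pi_prod_eq_pow {ι α : Type*} [Fintype ι] [MeasurableSpace α]
    (μ : Measure α) [IsProbabilityMeasure μ] {f : α → ℝ≥0∞} (hf : Measurable f) :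
    ∫⁻ ω, ∏ j, f (ω j) ∂Measure.pi (fun _ : ι => μ) = (∫⁻ x, f x ∂μ) ^ Fintype.card ι := by
  rw [lintegral_prod_eq_prod_lintegral_of_indepFun _ _
      (iIndepFun_pi (X := fun _ => f) fun _ => hf.aemeasurable)
      fun j => hf.comp (measurable_pi_apply j)]
  simp_rw [fun j => (measurePreserving_eval (fun _ : ι => μ) j).lintegral_comp hf]
  simp

lemma exp_neg_mul_sq_le_exp_neg_mul_sq_mul_exp_neg_mul_sub_sq {b r y : ℝ} (hb : 0 ≤ b)
    (hr : 0 ≤ r) (hry : r ≤ y) :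
    exp (-b * y ^ 2) ≤ exp (-b * r ^ 2) * exp (-b * (y - r) ^ 2) := by
  rw [← exp_add]
  exact exp_le_exp.2 (by nlinarith [mul_nonneg hb (mul_nonneg hr (sub_nonneg.2 hry))])

lemma setLIntegral_sq_gt_exp_neg_mul_sq_le {a b : ℝ} (ha : 0 ≤ a) (hb : 0 < b) :
    ∫⁻ x in {x : ℝ | a < x ^ 2}, ENNReal.ofReal (exp (-b * x ^ 2))
      ≤ ENNReal.ofReal (exp (-b * a) * sqrt (π / b)) := by
  set r := sqrt a
  have hS : MeasurableSet {x : ℝ | a < x ^ 2} := measurableSet_lt measurable_const (by fun_prop)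
  set φ : ℝ → ℝ≥0∞ := (Ioi 0).indicator fun y => ENNReal.ofReal (exp (-b * y ^ 2))
  have hφ_meas : Measurable φ :=
    (measurable_const.mul (measurable_id.pow_const 2)).exp.ennreal_ofReal.indicator
      measurableSet_Ioi
  have hφ : ∫⁻ y, φ y = ENNReal.ofReal (sqrt (π / b) / 2) := by
    rw [lintegral_indicator measurableSet_Ioi, ← integral_gaussian_Ioi,
      ofReal_integral_eq_lintegral_ofReal (integrable_exp_neg_mul_sq hb).integrableOn
        (ae_of_all _ fun _ => (exp_pos _).le)]
  have hshift : ∀ y, r < y →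
      ENNReal.ofReal (exp (-b * y ^ 2)) ≤ ENNReal.ofReal (exp (-b * a)) * φ (y - r) := by
    intro y hy
    rw [show φ (y - r) = ENNReal.ofReal (exp (-b * (y - r) ^ 2)) from
      indicator_of_mem (sub_pos.2 hy) _, ← ENNReal.ofReal_mul (exp_pos _).le, ← sq_sqrt ha]
    exact ENNReal.ofReal_le_ofReal
      (exp_neg_mul_sq_le_exp_neg_mul_sq_mul_exp_neg_mul_sub_sq hb.le (sqrt_nonneg a) hy.le)
  have hpt : ∀ x, {x : ℝ | a < x ^ 2}.indicator (fun x => ENNReal.ofReal (exp (-b * x ^ 2))) x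
      ≤ ENNReal.ofReal (exp (-b * a)) * (φ (x - r) + φ (-x - r)) := by
    intro x
    by_cases hx : a < x ^ 2
    · have hrx : r < |x| := by rw [← sqrt_sq_eq_abs]; exact sqrt_lt_sqrt ha hx
      rw [indicator_of_mem (show x ∈ {x : ℝ | a < x ^ 2} from hx), mul_add]
      rcases lt_abs.1 hrx with h | h
      · exact (hshift x h).trans le_self_add
      · exact (neg_sq x ▸ hshift (-x) h).trans le_add_self
    · simp [hx]
  calc ∫⁻ x in {x : ℝ | a < x ^ 2}, ENNReal.ofReal (exp (-b * x ^ 2))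
      _ ≤ ∫⁻ x, ENNReal.ofReal (exp (-b * a)) * (φ (x - r) + φ (-x - r)) := by
        rw [← lintegral_indicator hS]
        exact lintegral_mono hpt
      _ = ENNReal.ofReal (exp (-b * a)) * (2 * ∫⁻ y, φ y) := by
        rw [lintegral_const_mul _ (by fun_prop),
          lintegral_add_left (f := fun x => φ (x - r)) (hφ_meas.comp (measurable_sub_const r)),
          lintegral_neg_eq_self (fun x => φ (x - r)), lintegral_sub_right_eq_self, two_mul]
      _ = ENNReal.ofReal (exp (-b * a) * sqrt (π / b)) := by
        rw [hφ, ← ENNReal.ofReal_ofNat 2, ← ENNReal.ofReal_mul zero_le_two,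
          mul_div_cancel₀ _ two_ne_zero, ← ENNReal.ofReal_mul (exp_pos _).le]

lemma setLIntegral_sq_gt_exp_mul_sq_gaussianReal_le {a t : ℝ} (ha : 0 ≤ a) (ht : t < 1 / 2) :
    ∫⁻ x in {x : ℝ | a < x ^ 2}, ENNReal.ofReal (exp (t * x ^ 2)) ∂gaussianReal 0 1
      ≤ ENNReal.ofReal (exp (-(1 - 2 * t) * a / 2) / sqrt (1 - 2 * t)) := by
  set s := 1 - 2 * t with hs_def
  have hs : 0 < s := by linarith
  have hS : MeasurableSet {x : ℝ | a < x ^ 2} := measurableSet_lt measurable_const (by fun_prop)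
  have hdens : ∀ x, gaussianPDF 0 1 x * ENNReal.ofReal (exp (t * x ^ 2))
      = ENNReal.ofReal (sqrt (2 * π))⁻¹ * ENNReal.ofReal (exp (-(s / 2) * x ^ 2)) := by
    intro x
    rw [gaussianPDF, gaussianPDFReal, ← ENNReal.ofReal_mul (by positivity),
      ← ENNReal.ofReal_mul (by positivity), mul_assoc, ← exp_add]
    congr 3
    · simp
    · rw [hs_def]; push_cast; ring
  rw [gaussianReal_of_var_ne_zero 0 one_ne_zero,
    setLIntegral_withDensity_eq_setLIntegral_mul _ (measurable_gaussianPDF 0 1) (by fun_prop) hS]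
  simp_rw [Pi.mul_apply, hdens]
  rw [lintegral_const_mul _ (by fun_prop)]
  calc _ ≤ ENNReal.ofReal (sqrt (2 * π))⁻¹ *
        ENNReal.ofReal (exp (-(s / 2) * a) * sqrt (π / (s / 2))) := by
        gcongr
        exact setLIntegral_sq_gt_exp_neg_mul_sq_le ha (by positivity)
    _ = ENNReal.ofReal (exp (-s * a / 2) / sqrt s) := by
        rw [← ENNReal.ofReal_mul (by positivity)]
        congr 1
        rw [show π / (s / 2) = 2 * π / s by field_simp, sqrt_div' _ hs.le]
        field_simp

lemma lintegral_exp_mul_sq_indicator_gaussianReal_le {a t : ℝ} (ha : 0 ≤ a) (ht : t < 1 / 2) :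
    ∫⁻ x, ENNReal.ofReal (exp (t * (x ^ 2 * if a < x ^ 2 then 1 else 0))) ∂gaussianReal 0 1
      ≤ ENNReal.ofReal (exp (exp (-(1 - 2 * t) * a / 2) / sqrt (1 - 2 * t))) := by
  set β := exp (-(1 - 2 * t) * a / 2) / sqrt (1 - 2 * t)
  have hpt : ∀ x : ℝ, ENNReal.ofReal (exp (t * (x ^ 2 * if a < x ^ 2 then 1 else 0)))
      ≤ 1 + {x : ℝ | a < x ^ 2}.indicator (fun x => ENNReal.ofReal (exp (t * x ^ 2))) x := by
    intro x
    by_cases hx : a < x ^ 2 <;> simp [hx]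
  have hS : MeasurableSet {x : ℝ | a < x ^ 2} := measurableSet_lt measurable_const (by fun_prop)
  calc _ ≤ ∫⁻ x, 1 + {x : ℝ | a < x ^ 2}.indicator
          (fun x => ENNReal.ofReal (exp (t * x ^ 2))) x ∂gaussianReal 0 1 := lintegral_mono hpt
    _ = 1 + ∫⁻ x in {x : ℝ | a < x ^ 2}, ENNReal.ofReal (exp (t * x ^ 2)) ∂gaussianReal 0 1 := by
        rw [lintegral_add_left measurable_const, lintegral_indicator hS, lintegral_const,
          measure_univ, one_mul]
    _ ≤ 1 + ENNReal.ofReal β := by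
        gcongr
        exact setLIntegral_sq_gt_exp_mul_sq_gaussianReal_le ha ht
    _ ≤ ENNReal.ofReal (exp β) := by
        rw [← ENNReal.ofReal_one, ← ENNReal.ofReal_add zero_le_one (by positivity)]
        exact ENNReal.ofReal_le_ofReal (by linarith [add_one_le_exp β])

lemma measure_pi_gaussianReal_lt_sum_sq_indicator_le {ι : Type*} [Fintype ι] {a t : ℝ}
    (ha : 0 ≤ a) (ht0 : 0 ≤ t) (ht : t < 1 / 2) (M : ℝ) :
    Measure.pi (fun _ : ι => gaussianReal 0 1)
        {ω | M < ∑ j, (ω j) ^ 2 * (if a < (ω j) ^ 2 then 1 else 0)}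
      ≤ ENNReal.ofReal (exp (-(t * M) +
          Fintype.card ι * (exp (-(1 - 2 * t) * a / 2) / sqrt (1 - 2 * t)))) := by
  set g : ℝ → ℝ := fun x => x ^ 2 * if a < x ^ 2 then 1 else 0
  have hg : Measurable g :=
    (measurable_id.pow_const 2).mul (Measurable.ite
      (measurableSet_lt measurable_const (measurable_id.pow_const 2)) measurable_const
      measurable_const)
  calc _ ≤ ENNReal.ofReal (exp (-(t * M))) * ∫⁻ ω, ENNReal.ofReal (exp (t * ∑ j, g (ω j)))
        ∂Measure.pi (fun _ : ι => gaussianReal 0 1) :=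
        measure_lt_le_exp_neg_mul_mul_lintegral_exp _
          (Finset.measurable_sum _ fun j _ => hg.comp (measurable_pi_apply j)).aemeasurable ht0 M
    _ = ENNReal.ofReal (exp (-(t * M))) *
          (∫⁻ x, ENNReal.ofReal (exp (t * g x)) ∂gaussianReal 0 1) ^ Fintype.card ι := by
        rw [← lintegral_pi_prod_eq_pow _ (hg.const_mul t).exp.ennreal_ofReal]
        simp_rw [Finset.mul_sum, exp_sum, ENNReal.ofReal_prod_of_nonneg fun _ _ => (exp_pos _).le]
    _ ≤ ENNReal.ofReal (exp (-(t * M))) * ENNReal.ofReal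
          (exp (exp (-(1 - 2 * t) * a / 2) / sqrt (1 - 2 * t))) ^ Fintype.card ι := by
        gcongr
        exact lintegral_exp_mul_sq_indicator_gaussianReal_le ha ht
    _ = _ := by
        rw [← ENNReal.ofReal_pow (exp_pos _).le, ← ENNReal.ofReal_mul (exp_pos _).le,
          ← exp_nat_mul, ← exp_add]

lemma mul_exp_neg_mul_one_add_mul_log_le_rpow {p c s e : ℝ} (hp : 1 ≤ p) (hs : 0 ≤ s)
    (he : 1 - c * s / 2 ≤ e) :
    p * exp (-s * (1 + c * log p) / 2) ≤ p ^ e := by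
  have hp0 : 0 < p := by linarith
  have hlog : 0 ≤ log p := log_nonneg hp
  rw [rpow_def_of_pos hp0, ← exp_log hp0, ← exp_add, exp_log hp0]
  exact exp_le_exp.2 (by nlinarith)

/-- Tail bound for the thresholded chi-squared sum: if `Z₁,…,Z_p` are i.i.d. standard
Gaussians, `c₀ ≥ 2`, `κ ∈ (0, 1/2)` and `z⋆ = c₀ log p`, then
`P[Σ_j Z_j² 1{Z_j² > 1 + z⋆} > 4 κ⁻¹ p^{c₀κ}] ≤ exp(-p^{c₀κ})`. -/
theorem gaussian_truncated_chisq_sum_tail_bound (p : ℕ) (hp : 1 ≤ p)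
    (c₀ κ : ℝ) (hc₀ : 2 ≤ c₀) (hκ0 : 0 < κ) (hκ : κ < 1/2)
    (z : ℝ) (hz : z = c₀ * Real.log p) :
    Measure.pi (fun _ : Fin p => gaussianReal 0 1)
        {ω : Fin p → ℝ | 4 * κ⁻¹ * (p : ℝ)^(c₀ * κ) <
          ∑ j : Fin p, (ω j)^2 * (if 1 + z < (ω j)^2 then 1 else 0)}
      ≤ ENNReal.ofReal (Real.exp (-(p : ℝ)^(c₀ * κ))) := by
  have hp1 : (1 : ℝ) ≤ p := by exact_mod_cast hp
  have hz0 : 0 ≤ 1 + z := by rw [hz]; nlinarith [log_nonneg hp1]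
  set s := 1 - 2 * (3 * κ / 4) with hs
  have htM : 3 * κ / 4 * (4 * κ⁻¹ * (p : ℝ) ^ (c₀ * κ)) = 3 * (p : ℝ) ^ (c₀ * κ) := by
    field_simp
  have hsqrt : (sqrt s)⁻¹ ≤ 2 := by
    rw [inv_le_comm₀ (sqrt_pos.2 (by linarith)) two_pos, le_sqrt' (by norm_num)]
    linarith
  have htail : (p : ℝ) * exp (-s * (1 + c₀ * log p) / 2) ≤ (p : ℝ) ^ (c₀ * κ) :=
    mul_exp_neg_mul_one_add_mul_log_le_rpow hp1 (by linarith) (by nlinarith)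
  refine (measure_pi_gaussianReal_lt_sum_sq_indicator_le hz0 (t := 3 * κ / 4) (by positivity)
    (by linarith) _).trans (ENNReal.ofReal_le_ofReal (exp_le_exp.2 ?_))
  rw [htM, Fintype.card_fin, ← hs, hz, div_eq_mul_inv, ← mul_assoc]
  have hβ := mul_le_mul_of_nonneg_left hsqrt
    (by positivity : 0 ≤ (p : ℝ) * exp (-s * (1 + c₀ * log p) / 2))
  linarith
end

section
/- Let w > 0, σ > 0, z ≥ 0, β ∈ ℝ and t ∈ ℝ, set v := w β + t, and define b̃ := v/w − σ²/v if v² > σ² w (1+z) (note v ≠ 0 in that case) and b̃ := 0 otherwise. Then with ζ := t/(σ √w): if v² ≤ σ² w (1+z) then (b̃ − β)² = β² ≤ (2σ²/w)(ζ² + 1 + z); and if v² > σ² w (1+z) then |b̃ − β| = |t/w − σ²/v| ≤ (σ/√w)(1 + |ζ|). -/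
/-!
Below the threshold the estimator is `0`, and `(w β)² = (v - t)² ≤ 2 v² + 2 t²` bounds `β²` by the
threshold plus the noise `t² = σ² w ζ²`. Above it, `b̃ - β = t / w - σ² / v`; the first term has size
`σ |ζ| / √w`, and since `|v| > σ √w` the shrinkage term `σ² / |v|` is at most `σ / √w`.
-/

theorem sq_le_of_sq_mul_add_le {w β t c : ℝ} (hw : 0 < w) (h : (w * β + t) ^ 2 ≤ c) :
    β ^ 2 ≤ 2 * (c + t ^ 2) / w ^ 2 := by
  rw [le_div_iff₀ (by positivity)]
  nlinarith [sq_nonneg (w * β + 2 * t)]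

theorem div_eq_div_sqrt_mul_div {w σ : ℝ} (hw : 0 < w) (hσ : σ ≠ 0) (t : ℝ) :
    t / w = σ / √w * (t / (σ * √w)) := by
  have hsw : √w ≠ 0 := (Real.sqrt_pos.2 hw).ne'
  field_simp
  rw [Real.sq_sqrt hw.le]

theorem abs_sq_div_le_of_mul_lt_abs {σ s v : ℝ} (hσ : 0 < σ) (hs : 0 < s) (hv : σ * s < |v|) :
    |σ ^ 2 / v| ≤ σ / s := by
  rw [abs_div, abs_of_nonneg (sq_nonneg σ), div_le_div_iff₀ ((mul_pos hσ hs).trans hv) hs]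
  nlinarith

/-- Deterministic per-coordinate bound for the thresholded sparse Bayesian learning
estimator under an orthogonal design: with `w = ‖x_j‖² > 0`, `t = ⟨ε, x_j⟩`, `β = β⋆_j`,
`v = wβ + t`, threshold `z ≥ 0`, and
`b̃ = v/w - σ²/v` if `v² > σ² w (1+z)` and `b̃ = 0` otherwise, setting `ζ = t/(σ√w)`:
if `v² ≤ σ² w (1+z)` then `(b̃-β)² = β² ≤ (2σ²/w)(ζ² + 1 + z)`, while if
`v² > σ² w (1+z)` then `|b̃-β| = |t/w - σ²/v| ≤ (σ/√w)(1 + |ζ|)`. -/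
theorem sbl_threshold_coordinate_bound (w σ z β t : ℝ)
    (hw : 0 < w) (hσ : 0 < σ) (hz : 0 ≤ z)
    (v : ℝ) (hv : v = w * β + t)
    (b : ℝ) (hb : b = if σ^2 * w * (1 + z) < v^2 then v / w - σ^2 / v else 0)
    (ζ : ℝ) (hζ : ζ = t / (σ * Real.sqrt w)) :
    (v^2 ≤ σ^2 * w * (1 + z) →
      (b - β)^2 = β^2 ∧ β^2 ≤ 2 * σ^2 / w * (ζ^2 + 1 + z)) ∧
    (σ^2 * w * (1 + z) < v^2 →
      |b - β| = |t / w - σ^2 / v| ∧ |b - β| ≤ σ / Real.sqrt w * (1 + |ζ|)) := by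
  have hsw : 0 < √w := Real.sqrt_pos.2 hw
  refine ⟨fun hsmall => ⟨by simp [hb, not_lt.2 hsmall], ?_⟩, fun hlarge => ?_⟩
  · have hζsq : ζ ^ 2 = t ^ 2 / (σ ^ 2 * w) := by
      rw [hζ, div_pow, mul_pow, Real.sq_sqrt hw.le]
    calc β ^ 2 ≤ 2 * (σ ^ 2 * w * (1 + z) + t ^ 2) / w ^ 2 :=
          sq_le_of_sq_mul_add_le hw (hv ▸ hsmall)
      _ = 2 * σ ^ 2 / w * (ζ ^ 2 + 1 + z) := by
          rw [hζsq]
          field_simp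
          ring
  · have hvσ : σ * √w < |v| := by
      rw [← abs_of_pos (mul_pos hσ hsw), ← sq_lt_sq, mul_pow, Real.sq_sqrt hw.le]
      nlinarith [mul_pos (pow_pos hσ 2) hw]
    have hv0 : v ≠ 0 := abs_pos.1 ((mul_pos hσ hsw).trans hvσ)
    have herr : b - β = t / w - σ ^ 2 / v := by
      rw [hb, if_pos hlarge, hv, add_div, mul_div_cancel_left₀ β hw.ne']
      ring
    refine ⟨by rw [herr], ?_⟩
    calc |b - β| ≤ |t / w| + |σ ^ 2 / v| := herr ▸ abs_sub _ _
      _ ≤ σ / √w * |ζ| + σ / √w := by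
          gcongr
          · rw [div_eq_div_sqrt_mul_div hw hσ.ne', ← hζ, abs_mul, abs_of_pos (div_pos hσ hsw)]
          · exact abs_sq_div_le_of_mul_lt_abs hσ hsw hvσ
      _ = σ / √w * (1 + |ζ|) := by ring
end
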